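/- arXiv:2511.08210 — 5 statements merged into one kernel-verified Lean document; each statement's English description precedes it below -/
import Mathlib

section
/- If a matching M in a graph G admits no augmenting path of length less than 2/ε, then |M| ≥ (1-ε)·μ(G), where μ(G) is the maximum matching size. -/
/-!
Compare `M` with a maximum matching `M'`. If `|M| < |M'|`, some vertex is covered by `M'` but not
by `M`. A maximal path ending there whose edges alternate between `M' \ M` and `M \ M'` contains
every edge of `M ∪ M'` at its vertices, so deleting its edges from both matchings preserves the
hypothesis, and induction on `|M'|` applies. An odd such path is augmenting for `M`: it has
`2k + 1 ≥ 2/ε` edges, `k` from `M` and `k + 1` from `M'`. An even one has as many edges from `M` as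
from `M'`. Hence `(|M'| - |M|)(2/ε - 1) ≤ 2|M|`, which rearranges to `(1 - ε)|M'| ≤ |M|`.
-/

open SimpleGraph

variable {V : Type*} [Fintype V] [DecidableEq V]

/-- `M` is a matching of `G`: a set of edges of `G` that pairwise do not share endpoints. -/
def IsMatching (G : SimpleGraph V) (M : Set (Sym2 V)) : Prop :=
  M ⊆ G.edgeSet ∧ ∀ v : V, ∀ e₁ ∈ M, ∀ e₂ ∈ M, v ∈ e₁ → v ∈ e₂ → e₁ = e₂

/-- A vertex is free if no matching edge covers it. -/
def IsFree (M : Set (Sym2 V)) (v : V) : Prop := ∀ e ∈ M, v ∉ e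

/-- An alternating path with respect to the matching `M`:
a (simple) path whose consecutive edges alternate membership in `M`. -/
def IsAltPath (M : Set (Sym2 V)) {G : SimpleGraph V} {a b : V} (p : G.Walk a b) : Prop :=
  p.IsPath ∧ List.Chain' (fun e₁ e₂ => (e₁ ∈ M ↔ e₂ ∉ M)) p.edges

/-- An augmenting path: an alternating path between two distinct free vertices,
starting and ending with non-matching edges. -/
def IsAugPath (M : Set (Sym2 V)) {G : SimpleGraph V} {a b : V} (p : G.Walk a b) : Prop :=
  IsAltPath M p ∧ IsFree M a ∧ IsFree M b ∧ a ≠ b ∧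
  (∀ e, p.edges.head? = some e → e ∉ M) ∧ (∀ e, p.edges.getLast? = some e → e ∉ M)

/-- μ(G): the maximum cardinality of a matching of `G`. -/
noncomputable def matchNum (G : SimpleGraph V) : ℕ :=
  sSup {n | ∃ M : Set (Sym2 V), IsMatching G M ∧ M.ncard = n}

section

variable {α : Type*} {G : SimpleGraph α} {N N' : Set (Sym2 α)}

def coveredVerts (N : Set (Sym2 α)) : Set α := {v | ∃ e ∈ N, v ∈ e}

lemma IsMatching.mono {N₀ : Set (Sym2 α)} (hN : IsMatching G N) (h : N₀ ⊆ N) :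
    IsMatching G N₀ :=
  ⟨h.trans hN.1, fun v e₁ h₁ e₂ h₂ => hN.2 v e₁ (h h₁) e₂ (h h₂)⟩

lemma IsMatching.ncard_coveredVerts [Finite α] (hN : IsMatching G N) :
    (coveredVerts N).ncard = 2 * N.ncard := by
  classical
  set s := (Set.toFinite N).toFinset
  have hcov : coveredVerts N = ↑(s.biUnion Sym2.toFinset) := by
    ext v
    simp [coveredVerts, s]
  have hdisj : (s : Set (Sym2 α)).PairwiseDisjoint Sym2.toFinset := by
    intro e he f hf hne
    refine Finset.disjoint_left.mpr fun v hve hvf => hne ?_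
    simp only [Finset.mem_coe, Set.Finite.mem_toFinset, s] at he hf
    exact hN.2 v e he f hf (Sym2.mem_toFinset.mp hve) (Sym2.mem_toFinset.mp hvf)
  have htwo : ∀ e ∈ s, e.toFinset.card = 2 := by
    intro e he
    rw [Sym2.card_toFinset, if_neg]
    exact G.not_isDiag_of_mem_edgeSet (hN.1 ((Set.toFinite N).mem_toFinset.mp he))
  rw [hcov, Set.ncard_coe_finset, Finset.card_biUnion hdisj, Finset.sum_const_nat htwo,
    Set.ncard_eq_toFinset_card N, mul_comm]

lemma exists_isFree_mem_of_ncard_lt [Finite α] (hN : IsMatching G N) (hN' : IsMatching G N')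
    (h : N.ncard < N'.ncard) : ∃ v, IsFree N v ∧ ∃ e ∈ N', v ∈ e := by
  by_contra! hfree
  have hsub : coveredVerts N' ⊆ coveredVerts N := by
    rintro v ⟨e, he, hve⟩
    by_contra hv
    exact hfree v (fun f hf hvf => hv ⟨f, hf, hvf⟩) e he hve
  have := Set.ncard_le_ncard hsub
  rw [hN.ncard_coveredVerts, hN'.ncard_coveredVerts] at this
  omega

/-- Where the edge at distance `n` from the end of an alternating walk lies. Walks are indexed from
their end because maximal alternating paths are grown by `Walk.cons`. -/
def altSet (N N' : Set (Sym2 α)) (n : ℕ) : Set (Sym2 α) := if Even n then N' \ N else N \ N'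

lemma mem_altSet {e : Sym2 α} {n : ℕ} :
    e ∈ altSet N N' n ↔ (e ∈ N ↔ ¬ Even n) ∧ (e ∈ N' ↔ Even n) := by
  unfold altSet
  split_ifs with hn <;> simp [hn, and_comm]

lemma altSet_congr {m n : ℕ} (h : Even m ↔ Even n) : altSet N N' m = altSet N N' n := by
  simp [altSet, h]

lemma altSet_subset_union (n : ℕ) : altSet N N' n ⊆ N ∪ N' := by
  unfold altSet
  split_ifs
  · exact fun e he => Or.inr he.1
  · exact fun e he => Or.inl he.1

def IsAltWalk (N N' : Set (Sym2 α)) : ∀ {u w : α}, G.Walk u w → Prop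
  | _, _, .nil => True
  | _, _, .cons (u := u) (v := v) _ p => s(u, v) ∈ altSet N N' p.length ∧ IsAltWalk N N' p

lemma eq_of_mem_altSet (hN : IsMatching G N) (hN' : IsMatching G N') {n : ℕ} {e f : Sym2 α}
    (he : e ∈ altSet N N' n) (hf : f ∈ altSet N N' n) {v : α} (hve : v ∈ e) (hvf : v ∈ f) :
    e = f := by
  unfold altSet at he hf
  split_ifs at he hf
  · exact hN'.2 v e he.1 f hf.1 hve hvf
  · exact hN.2 v e he.1 f hf.1 hve hvf

section AltWalk

variable {u w : α} {q : G.Walk u w}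

lemma IsAltWalk.mem_union (hq : IsAltWalk N N' q) {e : Sym2 α} (he : e ∈ q.edges) :
    e ∈ N ∪ N' := by
  induction q with
  | nil => simp at he
  | cons h p ih =>
    rw [Walk.edges_cons, List.mem_cons] at he
    rcases he with rfl | he
    · exact altSet_subset_union _ hq.1
    · exact ih hq.2 he

lemma IsAltWalk.head?_mem (hq : IsAltWalk N N' q) {e : Sym2 α} (he : e ∈ q.edges.head?) :
    e ∈ altSet N N' (q.length - 1) := by
  cases q with
  | nil => simp at he
  | cons h p =>
    simp only [Walk.edges_cons, List.head?_cons, Option.mem_def, Option.some_inj] at he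
    simpa [← he] using hq.1

lemma IsAltWalk.getLast?_mem (hq : IsAltWalk N N' q) {e : Sym2 α}
    (he : e ∈ q.edges.getLast?) : e ∈ altSet N N' 0 := by
  induction q with
  | nil => simp at he
  | cons h p ih =>
    cases p with
    | nil =>
      simp only [Walk.edges_cons, Walk.edges_nil, List.getLast?_singleton, Option.mem_def,
        Option.some_inj] at he
      simpa [← he] using hq.1
    | cons h' p' =>
      rw [Walk.edges_cons, Walk.edges_cons, List.getLast?_cons_cons] at he
      exact ih hq.2 (by rwa [Walk.edges_cons])

lemma IsAltWalk.isChain (hq : IsAltWalk N N' q) :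
    List.IsChain (fun e₁ e₂ => e₁ ∈ N ↔ e₂ ∉ N) q.edges := by
  induction q with
  | nil => exact List.isChain_nil
  | cons h p ih =>
    refine List.isChain_cons.mpr ⟨fun e he => ?_, ih hq.2⟩
    have h₁ := mem_altSet.mp hq.1
    have h₂ := mem_altSet.mp (hq.2.head?_mem he)
    have hp : p.length - 1 + 1 = p.length := by
      cases p with
      | nil => simp at he
      | cons => simp
    rw [← hp, Nat.even_add_one] at h₁
    tauto

lemma IsAltWalk.ncard_inter_edgeSet (hq : IsAltWalk N N' q) (hnd : q.edges.Nodup) :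
    (N ∩ q.edgeSet).ncard = q.length / 2 ∧ (N' ∩ q.edgeSet).ncard = (q.length + 1) / 2 := by
  induction q with
  | nil => simp
  | cons h p ih =>
    rw [Walk.edges_cons, List.nodup_cons, ← Walk.mem_edgeSet] at hnd
    obtain ⟨hcN, hcN'⟩ := ih hq.2 hnd.2
    have hnot (A : Set (Sym2 α)) : s(_, _) ∉ A ∩ p.edgeSet := fun h => hnd.1 h.2
    have hmem := mem_altSet.mp hq.1
    have hfin (A : Set (Sym2 α)) : (A ∩ p.edgeSet).Finite :=
      (List.finite_toSet p.edges).subset Set.inter_subset_right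
    rw [Walk.edgeSet_cons, Walk.length_cons]
    by_cases hev : Even p.length
    · rw [Set.inter_insert_of_notMem (by tauto), Set.inter_insert_of_mem (by tauto),
        Set.ncard_insert_of_notMem (hnot N') (hfin N')]
      obtain ⟨k, hk⟩ := hev
      omega
    · rw [Set.inter_insert_of_mem (by tauto), Set.inter_insert_of_notMem (by tauto),
        Set.ncard_insert_of_notMem (hnot N) (hfin N)]
      obtain ⟨k, hk⟩ := Nat.not_even_iff_odd.mp hev
      omega

lemma IsAltWalk.exists_mem_edges (hq : IsAltWalk N N' q) {v : α} (hv : v ∈ q.support)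
    (hvu : v ≠ u) {n : ℕ} (hn : v ≠ w ∨ Even n) :
    ∃ g ∈ q.edges, v ∈ g ∧ g ∈ altSet N N' n := by
  induction q with
  | nil => exact absurd (by simpa using hv) hvu
  | @cons u y w h p ih =>
    rw [Walk.support_cons, List.mem_cons] at hv
    by_cases hvy : v = y
    · subst hvy
      by_cases hpar : Even p.length ↔ Even n
      · exact ⟨s(u, v), by simp, Sym2.mem_mk_right _ _, (altSet_congr hpar).subset hq.1⟩
      · cases p with
        | nil => simp_all
        | @cons _ z _ h' p' =>
          rw [Walk.length_cons, Nat.even_add_one] at hpar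
          exact ⟨s(v, z), by simp, Sym2.mem_mk_left _ _,
            (altSet_congr (by tauto)).subset hq.2.1⟩
    · obtain ⟨g, hg, hvg, hgn⟩ := ih hq.2 (hv.resolve_left hvu) hvy hn
      exact ⟨g, by simp [hg], hvg, hgn⟩

lemma IsAltWalk.mem_edges_of_mem (hN : IsMatching G N) (hN' : IsMatching G N')
    (hw : IsFree N w) (hq : IsAltWalk N N' q) {v : α} (hv : v ∈ q.support) (hvu : v ≠ u)
    {f : Sym2 α} (hf : f ∈ N ∪ N') (hvf : v ∈ f) : f ∈ q.edges := by
  rcases hf with hf | hf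
  · obtain ⟨g, hg, hvg, hgn⟩ :=
      hq.exists_mem_edges hv hvu (n := 1) (Or.inl fun hvw => hw f hf (hvw ▸ hvf))
    rwa [hN.2 v f hf g (by simpa using (mem_altSet.mp hgn).1) hvf hvg]
  · obtain ⟨g, hg, hvg, hgn⟩ := hq.exists_mem_edges hv hvu (n := 0) (Or.inr (by decide))
    rwa [hN'.2 v f hf g (by simpa using (mem_altSet.mp hgn).2) hvf hvg]

lemma IsAltWalk.mem_altSet_of_start_mem (hp : q.IsPath) (hq : IsAltWalk N N' q) {g : Sym2 α}
    (hg : g ∈ q.edges) (hug : u ∈ g) : g ∈ altSet N N' (q.length - 1) := by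
  cases q with
  | nil => simp at hg
  | cons h p =>
    rw [Walk.edges_cons, List.mem_cons] at hg
    rcases hg with rfl | hg
    · simpa using hq.1
    · exact absurd (p.mem_support_of_mem_edges hg hug) ((Walk.cons_isPath_iff h p).mp hp).2

lemma IsAltWalk.exists_cons (hN : IsMatching G N) (hN' : IsMatching G N') (hp : q.IsPath)
    (hq : IsAltWalk N N' q) (hw : IsFree N w) {f : Sym2 α} (hf : f ∈ altSet N N' q.length)
    (huf : u ∈ f) :
    ∃ (y : α) (h : G.Adj y u), (Walk.cons h q).IsPath ∧ IsAltWalk N N' (Walk.cons h q) := by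
  obtain ⟨y, rfl⟩ := Sym2.mem_iff_exists.mp huf
  have hadj : G.Adj u y := by
    rcases altSet_subset_union _ hf with h | h
    exacts [hN.1 h, hN'.1 h]
  have hf' : s(y, u) ∈ altSet N N' q.length := Sym2.eq_swap ▸ hf
  refine ⟨y, hadj.symm, (Walk.cons_isPath_iff _ _).mpr ⟨hp, fun hy => ?_⟩, hf', hq⟩
  -- The edge of the path at `y` with the colour of `s(u, y)` would be `s(u, y)` itself, an edge at
  -- the start `u`, where the path has the other colour.
  have hyw : y ≠ w ∨ Even q.length := by
    refine or_iff_not_imp_right.mpr fun hodd hyw => hw s(u, y) ?_ (hyw ▸ Sym2.mem_mk_right u y)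
    simpa [hodd] using (mem_altSet.mp hf).1
  obtain ⟨g, hg, hyg, hgn⟩ := hq.exists_mem_edges hy hadj.ne.symm hyw
  have hgu : g = s(u, y) := eq_of_mem_altSet hN hN' hgn hf hyg (Sym2.mem_mk_right u y)
  have hstart := hq.mem_altSet_of_start_mem hp (hgu ▸ hg) (Sym2.mem_mk_left u y)
  obtain ⟨m, hm⟩ : ∃ m, q.length = m + 1 :=
    Nat.exists_eq_add_one.mpr (q.length_edges ▸ List.length_pos_of_mem hg)
  rw [hm, Nat.add_sub_cancel] at hstart
  rw [hm] at hf
  have h₁ := mem_altSet.mp hstart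
  have h₂ := mem_altSet.mp hf
  rw [Nat.even_add_one] at h₂
  tauto

end AltWalk

structure IsMaxAltPath (N N' : Set (Sym2 α)) {u w : α} (q : G.Walk u w) : Prop where
  isPath : q.IsPath
  isAltWalk : IsAltWalk N N' q
  isFree_end : IsFree N w
  maximal : ∀ f ∈ altSet N N' q.length, u ∉ f

lemma exists_isMaxAltPath [Fintype α] (hN : IsMatching G N) (hN' : IsMatching G N') {w : α}
    (hw : IsFree N w) : ∃ (u : α) (q : G.Walk u w), IsMaxAltPath N N' q := by
  by_contra! hnot
  have hlong (n : ℕ) :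
      ∃ (u : α) (q : G.Walk u w), q.IsPath ∧ IsAltWalk N N' q ∧ q.length = n := by
    induction n with
    | zero => exact ⟨w, .nil, .nil, trivial, rfl⟩
    | succ n ih =>
      obtain ⟨u, q, hp, hq, rfl⟩ := ih
      obtain ⟨f, hf, huf⟩ : ∃ f ∈ altSet N N' q.length, u ∈ f := by
        by_contra! h
        exact hnot u q ⟨hp, hq, hw, h⟩
      obtain ⟨y, h, hp', hq'⟩ := hq.exists_cons hN hN' hp hw hf huf
      exact ⟨y, _, hp', hq', rfl⟩
  obtain ⟨u, q, hp, -, hlen⟩ := hlong (Fintype.card α)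
  exact hp.length_lt.ne hlen

namespace IsMaxAltPath

variable {u w : α} {q : G.Walk u w} (hmax : IsMaxAltPath N N' q)
include hmax

lemma length_pos (hw : ∃ e ∈ N', w ∈ e) : 0 < q.length := by
  cases q with
  | nil =>
    obtain ⟨e, he, hwe⟩ := hw
    have heN : e ∉ N := fun h => hmax.isFree_end e h hwe
    exact absurd hwe (hmax.maximal e (by simp [altSet, he, heN]))
  | cons => simp

lemma mem_edges_of_mem (hN : IsMatching G N) (hN' : IsMatching G N') {v : α}
    (hv : v ∈ q.support) {f : Sym2 α} (hf : f ∈ N ∪ N') (hvf : v ∈ f) : f ∈ q.edges := by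
  by_cases hvu : v = u
  · subst hvu
    have hfmax := hmax.maximal f
    cases q with
    | nil =>
      rcases hf with hf | hf
      · exact absurd hvf (hmax.isFree_end f hf)
      · have hfN : f ∉ N := fun h => hmax.isFree_end f h hvf
        exact absurd hvf (hfmax (by simp [altSet, hf, hfN]))
    | @cons _ y _ h p =>
      -- By maximality `f` is not of the next colour, so it shares a matching with the first edge.
      have hg := mem_altSet.mp hmax.isAltWalk.1
      have h₁ := fun hfN hgN => hN.2 v f hfN s(v, y) hgN hvf (Sym2.mem_mk_left v y)
      have h₂ := fun hfN hgN => hN'.2 v f hfN s(v, y) hgN hvf (Sym2.mem_mk_left v y)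
      rw [Walk.length_cons, mem_altSet, Nat.even_add_one, not_not] at hfmax
      rw [Set.mem_union] at hf
      rw [Walk.edges_cons, List.mem_cons]
      tauto
  · exact hmax.isAltWalk.mem_edges_of_mem hN hN' hmax.isFree_end hv hvu hf hvf

lemma isAugPath (hN : IsMatching G N) (hN' : IsMatching G N') (hodd : Odd q.length) :
    IsAugPath N q := by
  cases q with
  | nil => simp at hodd
  | @cons _ y _ h p =>
    have hev : Even p.length := by simpa [Nat.odd_add_one] using hodd
    refine ⟨⟨hmax.isPath, hmax.isAltWalk.isChain⟩, fun f hf huf => ?_, hmax.isFree_end,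
      fun hu => ((Walk.cons_isPath_iff h p).mp hmax.isPath).2 (hu ▸ p.end_mem_support),
      fun e he => ?_, fun e he => ?_⟩
    · have hfq := hmax.mem_edges_of_mem hN hN' (Walk.start_mem_support _) (Or.inl hf) huf
      have := hmax.isAltWalk.mem_altSet_of_start_mem hmax.isPath hfq huf
      simp [altSet, hev] at this
      exact this.2 hf
    · simpa [hev] using (mem_altSet.mp (hmax.isAltWalk.head?_mem he)).1
    · simpa using (mem_altSet.mp (hmax.isAltWalk.getLast?_mem he)).1

end IsMaxAltPath

lemma IsAugPath.of_sdiff {T : Set (Sym2 α)}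
    (hT : ∀ f ∈ N ∪ N', ∀ g ∈ T, ∀ v ∈ g, v ∈ f → f ∈ T) {a b : α} {p : G.Walk a b}
    (hp : IsAugPath (N \ T) p) (hpT : ∀ e ∈ p.edges, e ∈ N ∪ N' ∧ e ∉ T) : IsAugPath N p := by
  obtain ⟨⟨hpath, hchain⟩, ha, hb, hab, hhead, hlast⟩ := hp
  have hmem (e : Sym2 α) (he : e ∈ p.edges) : e ∈ N \ T ↔ e ∈ N := by simp [(hpT e he).2]
  have hfree (x : α) (hx : x ∈ p.support) (hxfree : IsFree (N \ T) x) : IsFree N x := by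
    intro f hf hxf
    obtain ⟨e, he, hxe⟩ :=
      (Walk.mem_support_iff_exists_mem_edges_of_not_nil (Walk.not_nil_of_ne hab)).mp hx
    by_cases hfT : f ∈ T
    · exact (hpT e he).2 (hT e (hpT e he).1 f hfT x hxf hxe)
    · exact hxfree f ⟨hf, hfT⟩ hxf
  refine ⟨⟨hpath, hchain.imp_of_mem_imp fun e₁ e₂ h₁ h₂ => ?_⟩,
    hfree a p.start_mem_support ha, hfree b p.end_mem_support hb, hab, fun e he => ?_,
    fun e he => ?_⟩
  · rw [hmem e₁ h₁, hmem e₂ h₂]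
    exact id
  · rw [← hmem e (List.mem_of_mem_head? he)]
    exact hhead e he
  · rw [← hmem e (List.mem_of_getLast? he)]
    exact hlast e he

variable (G) in
def LongAugPaths (N N' : Set (Sym2 α)) (L : ℝ) : Prop :=
  ∀ (a b : α) (p : G.Walk a b), IsAugPath N p → (∀ e ∈ p.edges, e ∈ N ∪ N') → L ≤ p.length

lemma LongAugPaths.sdiff {L : ℝ} {T : Set (Sym2 α)}
    (hT : ∀ f ∈ N ∪ N', ∀ g ∈ T, ∀ v ∈ g, v ∈ f → f ∈ T) (hlong : LongAugPaths G N N' L) :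
    LongAugPaths G (N \ T) (N' \ T) L := by
  intro a b p hp hpE
  have hpT (e : Sym2 α) (he : e ∈ p.edges) : e ∈ N ∪ N' ∧ e ∉ T := by
    rcases hpE e he with h | h
    exacts [⟨Or.inl h.1, h.2⟩, ⟨Or.inr h.1, h.2⟩]
  exact hlong a b p (hp.of_sdiff hT hpT) fun e he => (hpT e he).1

theorem ncard_sub_ncard_mul_le [Fintype α] {L : ℝ} (hL : 1 ≤ L) (hN : IsMatching G N)
    (hN' : IsMatching G N') (hlong : LongAugPaths G N N' L) :
    ((N'.ncard : ℝ) - N.ncard) * (L - 1) ≤ 2 * N.ncard := by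
  induction hn : N'.ncard using Nat.strong_induction_on generalizing N N' with
  | _ n ih =>
  subst hn
  rcases le_or_gt N'.ncard N.ncard with hle | hlt
  · have : (N'.ncard : ℝ) - N.ncard ≤ 0 := by simpa using hle
    nlinarith
  obtain ⟨w, hw, hw'⟩ := exists_isFree_mem_of_ncard_lt hN hN' hlt
  obtain ⟨u, q, hmax⟩ := exists_isMaxAltPath hN hN' hw
  obtain ⟨hcN, hcN'⟩ := hmax.isAltWalk.ncard_inter_edgeSet hmax.isPath.isTrail.edges_nodup
  set T := q.edgeSet
  have hT : ∀ f ∈ N ∪ N', ∀ g ∈ T, ∀ v ∈ g, v ∈ f → f ∈ T := fun f hf g hg v hvg hvf =>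
    hmax.mem_edges_of_mem hN hN' (q.mem_support_of_mem_edges hg hvg) hf hvf
  have hsplitN := Set.ncard_inter_add_ncard_sdiff_eq_ncard N T
  have hsplitN' := Set.ncard_inter_add_ncard_sdiff_eq_ncard N' T
  have hpos := hmax.length_pos hw'
  have IH := ih (N' \ T).ncard (by omega) (hN.mono Set.sdiff_subset)
    (hN'.mono Set.sdiff_subset) (hlong.sdiff hT) rfl
  rcases Nat.even_or_odd q.length with ⟨k, hk⟩ | ⟨k, hk⟩
  · have e₁ : (N.ncard : ℝ) = k + (N \ T).ncard := by exact_mod_cast (by omega : N.ncard = _)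
    have e₂ : (N'.ncard : ℝ) = k + (N' \ T).ncard := by
      exact_mod_cast (by omega : N'.ncard = _)
    rw [e₁, e₂]
    nlinarith
  · have hLq : L ≤ q.length := hlong u w q (hmax.isAugPath hN hN' ⟨k, hk⟩)
      fun e he => hmax.isAltWalk.mem_union he
    have e₀ : (q.length : ℝ) = 2 * k + 1 := by exact_mod_cast hk
    have e₁ : (N.ncard : ℝ) = k + (N \ T).ncard := by exact_mod_cast (by omega : N.ncard = _)
    have e₂ : (N'.ncard : ℝ) = k + 1 + (N' \ T).ncard := by
      exact_mod_cast (by omega : N'.ncard = _)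
    rw [e₁, e₂]
    nlinarith

lemma bddAbove_ncard_isMatching [Finite α] (G : SimpleGraph α) :
    BddAbove {n | ∃ M : Set (Sym2 α), IsMatching G M ∧ M.ncard = n} :=
  ⟨Nat.card (Sym2 α), by rintro n ⟨M, -, rfl⟩; exact Set.ncard_le_card M⟩

lemma exists_isMatching_ncard_eq_matchNum [Finite α] (G : SimpleGraph α) :
    ∃ M : Set (Sym2 α), IsMatching G M ∧ M.ncard = matchNum G := by
  refine Nat.sSup_mem ?_ (bddAbove_ncard_isMatching G)
  exact ⟨0, ∅, ⟨Set.empty_subset _, by simp⟩, Set.ncard_empty _⟩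

lemma IsMatching.ncard_le_matchNum [Finite α] {M : Set (Sym2 α)} (hM : IsMatching G M) :
    M.ncard ≤ matchNum G :=
  le_csSup (bddAbove_ncard_isMatching G) ⟨M, hM, rfl⟩

end

/-- Hopcroft–Karp bound: if a matching `M` admits no augmenting path of length
less than `2/ε`, then `|M| ≥ (1-ε)·μ(G)`. -/
theorem stmt0 (G : SimpleGraph V) (M : Set (Sym2 V)) (hM : IsMatching G M)
    (ε : ℝ) (hε : 0 < ε)
    (h : ∀ (a b : V) (p : G.Walk a b), IsAugPath M p → ¬ ((p.length : ℝ) < 2 / ε)) :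
    (1 - ε) * (matchNum G : ℝ) ≤ (M.ncard : ℝ) := by
  rcases le_or_gt 1 ε with hε1 | hε1
  · exact (mul_nonpos_of_nonpos_of_nonneg (by linarith) (Nat.cast_nonneg _)).trans
      (Nat.cast_nonneg _)
  obtain ⟨M', hM', hM'card⟩ := exists_isMatching_ncard_eq_matchNum G
  have hL : 1 ≤ 2 / ε := by rw [le_div_iff₀ hε]; linarith
  have key := ncard_sub_ncard_mul_le hL hM hM' fun a b p hp _ => not_lt.mp (h a b p hp)
  have hle : (M.ncard : ℝ) ≤ M'.ncard := by exact_mod_cast hM'card ▸ hM.ncard_le_matchNum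
  rw [← hM'card]
  have key' : ((M'.ncard : ℝ) - M.ncard) * (2 - ε) ≤ 2 * ε * M.ncard := by
    have := mul_le_mul_of_nonneg_left key hε.le
    rw [mul_left_comm, mul_sub, mul_div_cancel₀ _ hε.ne', mul_one] at this
    linarith
  nlinarith
end

section
/- If M is a matching of G and M* is a maximum matching, then the symmetric difference M Δ M* contains at least μ(G) − |M| vertex-disjoint augmenting paths with respect to M. -/
open SimpleGraph

variable {V : Type*} [Fintype V] [DecidableEq V]

/-!
Let `S` be the set of vertices covered by `N` but not by `M`, and `T` the set of those covered by
`M` but not by `N`; counting covered vertices gives `|S| - |T| = 2 (|N| - |M|)`. From each `b ∈ S`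
follow a maximal path whose edges lie alternately in `N \ M` and `M \ N`. No other edge of `M Δ N`
touches it and its inner vertices are covered by both matchings, so it ends in `S`, and is then
`M`-augmenting, or in `T`; moreover two such paths are either vertex-disjoint or the same path
started from its two ends. Paths ending in `T` have distinct ends, so at least `|S| - |T|` vertices
of `S` start augmenting paths, and every augmenting path arises from exactly two of them.
-/

section

-- A fresh `V`, so that the instance arguments `[Fintype V] [DecidableEq V]` above are not
-- included in every lemma.
variable {V : Type*} {G : SimpleGraph V} {P Q : Set (Sym2 V)}

def covered (P : Set (Sym2 V)) : Set V := {v | ∃ e ∈ P, v ∈ e}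

lemma isFree_iff_notMem_covered {v : V} : IsFree P v ↔ v ∉ covered P := by
  simp [IsFree, covered]

lemma IsMatching.mem_covered_diff (hP : IsMatching G P) {e : Sym2 V} {v : V} (he : e ∈ P \ Q)
    (hv : v ∈ e) (h : ∀ f ∈ Q \ P, v ∉ f) : v ∈ covered P \ covered Q := by
  refine ⟨⟨e, he.1, hv⟩, ?_⟩
  rintro ⟨f, hfQ, hvf⟩
  by_cases hfP : f ∈ P
  · exact he.2 (hP.2 v f hfP e he.1 hvf hv ▸ hfQ)
  · exact h f ⟨hfQ, hfP⟩ hvf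

lemma IsMatching.ncard_covered [Finite V] (hP : IsMatching G P) :
    (covered P).ncard = 2 * P.ncard := by
  classical
  have hfin := P.toFinite
  have hcov : covered P = ↑(hfin.toFinset.biUnion Sym2.toFinset) := by
    ext v
    simp [covered, Sym2.mem_toFinset]
  rw [hcov, Set.ncard_coe_finset, Finset.card_biUnion, Set.ncard_eq_toFinset_card P hfin,
    mul_comm, ← smul_eq_mul, ← Finset.sum_const]
  · refine Finset.sum_congr rfl fun e he => Sym2.card_toFinset_of_not_isDiag e ?_
    exact G.not_isDiag_of_mem_edgeSet (hP.1 (hfin.mem_toFinset.mp he))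
  · intro e he f hf hef
    refine Finset.disjoint_left.mpr fun v hve hvf => hef ?_
    exact hP.2 v e (hfin.mem_toFinset.mp he) f (hfin.mem_toFinset.mp hf)
      (Sym2.mem_toFinset.mp hve) (Sym2.mem_toFinset.mp hvf)

lemma IsMatching.ncard_covered_diff_add [Finite V] (hP : IsMatching G P) (hQ : IsMatching G Q) :
    (covered Q \ covered P).ncard + 2 * P.ncard
      = (covered P \ covered Q).ncard + 2 * Q.ncard := by
  rw [← hP.ncard_covered, ← hQ.ncard_covered,
    ← Set.ncard_inter_add_ncard_sdiff_eq_ncard (covered P) (covered Q),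
    ← Set.ncard_inter_add_ncard_sdiff_eq_ncard (covered Q) (covered P), Set.inter_comm]
  ring

namespace SimpleGraph.Walk

-- Exchanging `P` and `Q` at every step encodes the alternation without any parity bookkeeping.
def Alternates : Set (Sym2 V) → Set (Sym2 V) → {u v : V} → G.Walk u v → Prop
  | _, _, _, _, nil => True
  | P, Q, u, _, cons (v := v) _ p => s(u, v) ∈ P \ Q ∧ p.Alternates Q P

-- The `nil` clause says that the walk cannot be continued at its end.
def AlternatesMaximally : Set (Sym2 V) → Set (Sym2 V) → {u v : V} → G.Walk u v → Prop
  | P, Q, u, _, nil => ∀ e ∈ P \ Q, u ∉ e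
  | P, Q, u, _, cons (v := v) _ p => s(u, v) ∈ P \ Q ∧ p.AlternatesMaximally Q P

variable {u v y : V}

theorem AlternatesMaximally.alternates {p : G.Walk u v} (hp : p.AlternatesMaximally P Q) :
    p.Alternates P Q := by
  induction p generalizing P Q with
  | nil => trivial
  | cons _ p ih => exact ⟨hp.1, ih hp.2⟩

theorem Alternates.mem_symmDiff {p : G.Walk u v} (hp : p.Alternates P Q) :
    ∀ e ∈ p.edges, e ∈ symmDiff P Q := by
  induction p generalizing P Q with
  | nil => simp
  | cons _ p ih =>
    intro e he
    rcases List.mem_cons.mp he with rfl | he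
    · exact Or.inl hp.1
    · exact symmDiff_comm Q P ▸ ih hp.2 e he

theorem Alternates.chain {p : G.Walk u v} (hp : p.Alternates P Q) :
    List.IsChain (fun e₁ e₂ => e₁ ∈ P ↔ e₂ ∉ P) p.edges ∧
      List.IsChain (fun e₁ e₂ => e₁ ∈ Q ↔ e₂ ∉ Q) p.edges := by
  induction p generalizing P Q with
  | nil => exact ⟨.nil, .nil⟩
  | cons _ p ih =>
    obtain ⟨hQ, hP⟩ := ih hp.2
    cases p with
    | nil => exact ⟨.singleton _, .singleton _⟩
    | cons _ p =>
      obtain ⟨h₁, h₂, -⟩ := hp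
      exact ⟨.cons_cons (iff_of_true h₁.1 h₂.2) hP,
        .cons_cons (iff_of_false h₁.2 (not_not.mpr h₂.1)) hQ⟩

theorem Alternates.exists_concat (hP : P ⊆ G.edgeSet) (hQ : Q ⊆ G.edgeSet) {p : G.Walk u v}
    (hp : p.Alternates P Q) (hmax : ¬p.AlternatesMaximally P Q) :
    ∃ y, ∃ h : G.Adj v y, (p.concat h).Alternates P Q := by
  induction p generalizing P Q with
  | nil =>
    simp only [AlternatesMaximally, not_forall, not_not] at hmax
    obtain ⟨e, he, hue⟩ := hmax
    obtain ⟨y, rfl⟩ := Sym2.mem_iff_exists.mp hue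
    exact ⟨y, hP he.1, he, trivial⟩
  | cons _ p ih =>
    obtain ⟨y, hy, hc⟩ := ih hQ hP hp.2 fun h => hmax ⟨hp.1, h⟩
    exact ⟨y, hy, hp.1, hc⟩

theorem Alternates.eq_of_concat_of_mem_support (hP : IsMatching G P) (hQ : IsMatching G Q)
    {p : G.Walk u v} (hpath : p.IsPath) (h : G.Adj v y) (hp : (p.concat h).Alternates P Q)
    (hy : y ∈ p.support) : y = u ∧ s(v, y) ∈ Q \ P := by
  induction p generalizing P Q with
  | nil => exact absurd (List.mem_singleton.mp hy) h.ne.symm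
  | @cons u w v h₀ p ih =>
    obtain ⟨hpath', hup⟩ := (cons_isPath_iff h₀ p).mp hpath
    obtain ⟨h₁, h₂⟩ := hp
    rcases List.mem_cons.mp hy with rfl | hy
    · refine ⟨rfl, ?_⟩
      rcases Set.mem_symmDiff.mp (h₂.mem_symmDiff s(v, y) (by simp)) with hvy | hvy
      · exact hvy
      · have hvw : s(v, y) = s(w, y) := (hP.2 y _ hvy.1 _ h₁.1 (Sym2.mem_mk_right _ _)
          (Sym2.mem_mk_left _ _)).trans (Sym2.eq_swap)
        obtain rfl := Sym2.congr_left.mp hvw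
        obtain rfl := eq_nil_iff_nil.mpr (isPath_iff_nil.mp hpath')
        exact absurd h₂.1.1 hvy.2
    · obtain ⟨rfl, hwy⟩ := ih hQ hP hpath' h h₂ hy
      have hvu : s(v, y) = s(u, y) := hP.2 y _ hwy.1 _ h₁.1 (Sym2.mem_mk_right _ _)
        (Sym2.mem_mk_right _ _)
      exact absurd (Sym2.congr_left.mp hvu ▸ p.end_mem_support) hup

theorem exists_alternatesMaximally_isPath [Finite V] (hP : IsMatching G P) (hQ : IsMatching G Q)
    (u : V) (hu : ∀ e ∈ Q \ P, u ∉ e) :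
    ∃ v, ∃ p : G.Walk u v, p.AlternatesMaximally P Q ∧ p.IsPath := by
  have := Fintype.ofFinite V
  by_contra! hnone
  have hlong : ∀ n, ∃ v, ∃ p : G.Walk u v, p.Alternates P Q ∧ p.IsPath ∧ p.length = n := by
    intro n
    induction n with
    | zero => exact ⟨u, nil, trivial, .nil, rfl⟩
    | succ n ih =>
      obtain ⟨v, p, hp, hpath, rfl⟩ := ih
      obtain ⟨y, h, hc⟩ := hp.exists_concat hP.1 hQ.1 fun hmax => hnone v p hmax hpath
      have hy : y ∉ p.support := fun hy => by
        obtain ⟨rfl, hvy⟩ := hc.eq_of_concat_of_mem_support hP hQ hpath h hy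
        exact hu _ hvy (Sym2.mem_mk_right _ _)
      exact ⟨y, p.concat h, hc, hpath.concat hy h, length_concat p h⟩
  obtain ⟨v, p, -, hpath, hlen⟩ := hlong (Fintype.card V)
  exact (hlen ▸ hpath.length_lt).false

theorem AlternatesMaximally.mem_edges_or (hP : IsMatching G P) (hQ : IsMatching G Q)
    {p : G.Walk u v} (hp : p.AlternatesMaximally P Q) {x : V} (hx : x ∈ p.support) {e : Sym2 V}
    (he : e ∈ symmDiff P Q) (hxe : x ∈ e) : e ∈ p.edges ∨ x = u ∧ e ∈ Q \ P := by
  induction p generalizing P Q with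
  | nil =>
    obtain rfl := List.mem_singleton.mp hx
    rcases Set.mem_symmDiff.mp he with he | he
    · exact absurd hxe (hp e he)
    · exact Or.inr ⟨rfl, he⟩
  | cons _ p ih =>
    rw [edges_cons, List.mem_cons]
    rcases List.mem_cons.mp hx with rfl | hx
    · rcases Set.mem_symmDiff.mp he with he | he
      · exact Or.inl (Or.inl (hP.2 x e he.1 _ hp.1.1 hxe (Sym2.mem_mk_left _ _)))
      · exact Or.inr ⟨rfl, he⟩
    · rcases ih hQ hP hp.2 hx (symmDiff_comm P Q ▸ he) with he' | ⟨rfl, he'⟩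
      · exact Or.inl (Or.inr he')
      · exact Or.inl (Or.inl (hP.2 x e he'.1 _ hp.1.1 hxe (Sym2.mem_mk_right _ _)))

theorem AlternatesMaximally.end_mem (hP : IsMatching G P) (hQ : IsMatching G Q)
    {p : G.Walk u v} (hp : p.AlternatesMaximally P Q) (hnil : ¬p.Nil) :
    v ∈ covered P \ covered Q ∨ v ∈ covered Q \ covered P := by
  induction p generalizing P Q with
  | nil => exact absurd nil_nil hnil
  | cons _ p ih =>
    cases p with
    | nil => exact Or.inl (hP.mem_covered_diff hp.1 (Sym2.mem_mk_right _ _) hp.2)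
    | cons => exact (ih hQ hP hp.2 not_nil_cons).symm

theorem AlternatesMaximally.ne_and_end_mem (hP : IsMatching G P) (hQ : IsMatching G Q)
    {p : G.Walk u v} (hp : p.AlternatesMaximally P Q) (hpath : p.IsPath)
    (hu : u ∈ covered P \ covered Q) :
    u ≠ v ∧ (v ∈ covered P \ covered Q ∨ v ∈ covered Q \ covered P) := by
  have hnil : ¬p.Nil := by
    obtain ⟨e, he, hue⟩ := hu.1
    cases p with
    | nil => exact fun _ => hp e ⟨he, fun he' => hu.2 ⟨e, he', hue⟩⟩ hue
    | cons => exact not_nil_cons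
  exact ⟨hpath.nil_iff_eq.not.mp hnil, hp.end_mem hP hQ hnil⟩

theorem Alternates.mem_covered {p : G.Walk u v} (hp : p.Alternates P Q) {x : V}
    (hx : x ∈ p.support) (hxu : x ≠ u) (hxv : x ≠ v) : x ∈ covered P ∩ covered Q := by
  induction p generalizing P Q with
  | nil => exact absurd (List.mem_singleton.mp hx) hxu
  | @cons u w v _ p ih =>
    replace hx := (List.mem_cons.mp hx).resolve_left hxu
    by_cases hxw : x = w
    · subst hxw
      cases p with
      | nil => exact absurd rfl hxv
      | cons _ p =>
        exact ⟨⟨_, hp.1.1, Sym2.mem_mk_right _ _⟩, ⟨_, hp.2.1.1, Sym2.mem_mk_left _ _⟩⟩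
    · have := ih hp.2 hx hxw hxv
      exact ⟨this.2, this.1⟩

theorem forall_mem_support_of_closed {D : Set (Sym2 V)} {A : Set V}
    (hA : ∀ e ∈ D, ∀ x ∈ e, ∀ y ∈ e, x ∈ A → y ∈ A) {p : G.Walk u v}
    (hp : ∀ e ∈ p.edges, e ∈ D) {x : V} (hx : x ∈ p.support) (hxA : x ∈ A) :
    ∀ y ∈ p.support, y ∈ A := by
  induction p generalizing x with
  | nil =>
    rintro y hy
    rwa [List.mem_singleton.mp hy, ← List.mem_singleton.mp hx]
  | @cons u w v _ p ih =>
    have hD : s(u, w) ∈ D := hp _ List.mem_cons_self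
    have hpD : ∀ e ∈ p.edges, e ∈ D := fun e he => hp e (List.mem_cons_of_mem _ he)
    have hwA : w ∈ A := by
      rcases List.mem_cons.mp hx with rfl | hx
      · exact hA _ hD _ (Sym2.mem_mk_left _ _) _ (Sym2.mem_mk_right _ _) hxA
      · exact ih hpD hx hxA w p.start_mem_support
    have hpA := ih hpD p.start_mem_support hwA
    rintro y hy
    rcases List.mem_cons.mp hy with rfl | hy
    · exact hA _ hD _ (Sym2.mem_mk_right _ _) _ (Sym2.mem_mk_left _ _) hwA
    · exact hpA y hy

theorem mem_of_head?_edges {p : G.Walk u v} {e : Sym2 V} (he : p.edges.head? = some e) :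
    u ∈ e := by
  cases p with
  | nil => simp at he
  | cons => exact Option.some.inj he ▸ Sym2.mem_mk_left _ _

theorem mem_of_getLast?_edges {p : G.Walk u v} {e : Sym2 V} (he : p.edges.getLast? = some e) :
    v ∈ e :=
  mem_of_head?_edges (p := p.reverse) (by rwa [edges_reverse, List.head?_reverse])

theorem AlternatesMaximally.eq_or_eq_of_mem_support (hP : IsMatching G P) (hQ : IsMatching G Q)
    {p : G.Walk u v} (hp : p.AlternatesMaximally P Q) (hu : u ∉ covered Q) {u' v' : V}
    {q : G.Walk u' v'} (hq : q.Alternates P Q) (hu' : u' ∉ covered Q) {x : V}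
    (hxp : x ∈ p.support) (hxq : x ∈ q.support) : u' = u ∨ u' = v := by
  have hclosed : ∀ e ∈ symmDiff P Q, ∀ y ∈ e, ∀ z ∈ e, y ∈ p.support → z ∈ p.support := by
    intro e he y hy z hz hyp
    rcases hp.mem_edges_or hP hQ hyp he hy with he | ⟨rfl, he⟩
    · obtain ⟨z', rfl⟩ := Sym2.mem_iff_exists.mp hz
      exact p.fst_mem_support_of_mem_edges he
    · exact absurd ⟨e, he.1, hy⟩ hu
  have hu'p : u' ∈ p.support := forall_mem_support_of_closed (A := {y | y ∈ p.support}) hclosed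
    hq.mem_symmDiff hxq hxp u' q.start_mem_support
  by_contra! h
  exact hu' (hp.alternates.mem_covered hu'p h.1 h.2).2

end SimpleGraph.Walk

theorem isAugPath_of_alternates {M N : Set (Sym2 V)} {u v : V} {p : G.Walk u v}
    (hp : p.Alternates N M) (hpath : p.IsPath) (hu : IsFree M u) (hv : IsFree M v) (huv : u ≠ v) :
    IsAugPath M p :=
  ⟨⟨hpath, hp.chain.2⟩, hu, hv, huv, fun _ he hM => hu _ hM (Walk.mem_of_head?_edges he),
    fun _ he hM => hv _ hM (Walk.mem_of_getLast?_edges he)⟩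

theorem ncard_le_two_mul_ncard_of_involution {α : Type*} [LinearOrder α] [Finite α] {s : Set α}
    (f : α → α) (hmaps : ∀ a ∈ s, f a ∈ s) (hinv : ∀ a ∈ s, f (f a) = a)
    (hne : ∀ a ∈ s, f a ≠ a) : s.ncard ≤ 2 * {a ∈ s | a < f a}.ncard := by
  have hle : (s \ {a ∈ s | a < f a}).ncard ≤ {a ∈ s | a < f a}.ncard := by
    refine Set.ncard_le_ncard_of_injOn f (fun a ha => ⟨hmaps a ha.1, ?_⟩) ?_
    · rw [hinv a ha.1]
      exact lt_of_le_of_ne (not_lt.mp fun h => ha.2 ⟨ha.1, h⟩) (hne a ha.1)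
    · intro a ha b hb hab
      rw [← hinv a ha.1, ← hinv b hb.1, hab]
  have := Set.ncard_inter_add_ncard_sdiff_eq_ncard s {a ∈ s | a < f a}
  rw [Set.inter_eq_right.mpr (Set.sep_subset s _)] at this
  omega

theorem exists_alternatesMaximally_family [Finite V] {M N : Set (Sym2 V)} (hM : IsMatching G M)
    (hN : IsMatching G N) : ∃ (x : V → V) (w : ∀ b, G.Walk b (x b)),
      ∀ b ∈ covered N \ covered M, (w b).AlternatesMaximally N M ∧ (w b).IsPath := by
  have hex (b : V) : ∃ y, ∃ p : G.Walk b y,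
      b ∈ covered N \ covered M → p.AlternatesMaximally N M ∧ p.IsPath := by
    by_cases hb : b ∈ covered N \ covered M
    · obtain ⟨y, p, hp⟩ :=
        Walk.exists_alternatesMaximally_isPath hN hM b fun e he hbe => hb.2 ⟨e, he.1, hbe⟩
      exact ⟨y, p, fun _ => hp⟩
    · exact ⟨b, .nil, fun h => absurd h hb⟩
  choose x w hw using hex
  exact ⟨x, w, hw⟩

theorem two_mul_sub_le_ncard_of_alternatesMaximally [Finite V] {M N : Set (Sym2 V)}
    (hM : IsMatching G M) (hN : IsMatching G N) {x : V → V} (w : ∀ b, G.Walk b (x b))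
    (hw : ∀ b ∈ covered N \ covered M, (w b).AlternatesMaximally N M ∧ (w b).IsPath) :
    2 * (N.ncard - M.ncard) ≤ {b ∈ covered N \ covered M | x b ∈ covered N \ covered M}.ncard := by
  set S := covered N \ covered M
  have hST : (S \ {b ∈ S | x b ∈ S}).ncard ≤ (covered M \ covered N).ncard := by
    refine Set.ncard_le_ncard_of_injOn x (fun b hb => ?_) fun b hb b' hb' hbb' => ?_
    · exact ((hw b hb.1).1.ne_and_end_mem hN hM (hw b hb.1).2 hb.1).2.resolve_left
        fun h => hb.2 ⟨hb.1, h⟩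
    · have hmem : x b ∈ (w b').support := by rw [hbb']; exact (w b').end_mem_support
      rcases (hw b hb.1).1.eq_or_eq_of_mem_support hN hM hb.1.2
          (hw b' hb'.1).1.alternates hb'.1.2
          (w b).end_mem_support hmem with h | h
      · exact h.symm
      · exact absurd (h ▸ hb'.1) fun h' => hb.2 ⟨hb.1, h'⟩
  have hSA := Set.ncard_inter_add_ncard_sdiff_eq_ncard S {b ∈ S | x b ∈ S}
  rw [Set.inter_eq_right.mpr (Set.sep_subset S _)] at hSA
  have hcov : S.ncard + 2 * M.ncard = (covered M \ covered N).ncard + 2 * N.ncard :=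
    hM.ncard_covered_diff_add hN
  omega

theorem exists_disjoint_isAugPath [Finite V] {M N : Set (Sym2 V)} (hM : IsMatching G M)
    (hN : IsMatching G N) :
    ∃ (k : ℕ) (A : Fin k → (a : V) × (b : V) × G.Walk a b),
      N.ncard - M.ncard ≤ k ∧
      (∀ i, IsAugPath M (A i).2.2 ∧ ∀ e ∈ (A i).2.2.edges, e ∈ symmDiff M N) ∧
      (∀ i j, i ≠ j → ∀ v ∈ (A i).2.2.support, v ∉ (A j).2.2.support) := by
  set S := covered N \ covered M
  obtain ⟨x, w, hw⟩ := exists_alternatesMaximally_family hM hN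
  have hne (b : V) (hb : b ∈ S) : b ≠ x b := ((hw b hb).1.ne_and_end_mem hN hM (hw b hb).2 hb).1
  have hinv (b : V) (hb : b ∈ S) (hxb : x b ∈ S) : x (x b) = b :=
    (((hw _ hxb).1.eq_or_eq_of_mem_support hN hM hxb.2
      (hw b hb).1.alternates hb.2 (w (x b)).start_mem_support
      (w b).end_mem_support).resolve_left (hne b hb)).symm
  -- Every augmenting path is found from both of its ends; keep the copy starting at the smaller one.
  let _ : LinearOrder V := LinearOrder.lift' _ (Finite.equivFin V).injective
  set A := {b ∈ {b ∈ S | x b ∈ S} | b < x b}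
  have hk : N.ncard - M.ncard ≤ Nat.card A := by
    have h₁ : {b ∈ S | x b ∈ S}.ncard ≤ 2 * A.ncard := ncard_le_two_mul_ncard_of_involution x
      (fun b hb => ⟨hb.2, by rw [hinv b hb.1 hb.2]; exact hb.1⟩) (fun b hb => hinv b hb.1 hb.2)
      fun b hb => (hne b hb.1).symm
    have h₂ : 2 * (N.ncard - M.ncard) ≤ {b ∈ S | x b ∈ S}.ncard :=
      two_mul_sub_le_ncard_of_alternatesMaximally hM hN w hw
    rw [Nat.card_coe_set_eq]
    omega
  let e := (Finite.equivFin A).symm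
  refine ⟨Nat.card A, fun i => ⟨e i, x (e i), w (e i)⟩, hk, fun i => ?_, fun i j hij y hyi hyj => ?_⟩
  · obtain ⟨⟨hb, hxb⟩, -⟩ := (e i).2
    obtain ⟨hmax, hpath⟩ := hw _ hb
    exact ⟨isAugPath_of_alternates hmax.alternates hpath (isFree_iff_notMem_covered.mpr hb.2)
      (isFree_iff_notMem_covered.mpr hxb.2) (hne _ hb),
      symmDiff_comm N M ▸ hmax.alternates.mem_symmDiff⟩
  · obtain ⟨⟨hb, hxb⟩, hlt⟩ := (e i).2
    obtain ⟨⟨hb', -⟩, hlt'⟩ := (e j).2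
    rcases (hw _ hb).1.eq_or_eq_of_mem_support hN hM hb.2
        (hw _ hb').1.alternates hb'.2 hyi hyj with h | h
    · exact hij (e.injective (Subtype.ext h.symm))
    · rw [h, hinv _ hb hxb] at hlt'
      exact lt_asymm hlt hlt'

end

/-- If `M` is a matching and `Mmax` a maximum matching, then the symmetric difference
`M Δ Mmax` contains at least `μ(G) − |M|` vertex-disjoint augmenting paths w.r.t. `M`. -/
theorem stmt1 (G : SimpleGraph V) (M Mmax : Set (Sym2 V))
    (hM : IsMatching G M) (hMmax : IsMatching G Mmax) (hmax : Mmax.ncard = matchNum G) :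
    ∃ (k : ℕ) (A : Fin k → (a : V) × (b : V) × G.Walk a b),
      matchNum G - M.ncard ≤ k ∧
      (∀ i, IsAugPath M (A i).2.2 ∧ ∀ e ∈ (A i).2.2.edges, e ∈ symmDiff M Mmax) ∧
      (∀ i j, i ≠ j → ∀ v ∈ (A i).2.2.support, v ∉ (A j).2.2.support) :=
  hmax ▸ exists_disjoint_isAugPath hM hMmax
end

section
/- Augmenting a matching M along a maximal set of vertex-disjoint shortest augmenting paths strictly increases the length of the shortest augmenting path: if every shortest augmenting path of (G,M) has length 2ℓ+1 and M' is obtained by augmenting along a maximal vertex-disjoint family of such paths, then every augmenting path of (G,M') has length at least 2ℓ+3. -/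
/-!
Let `U` be the set of edges of the family, `M' = M ∆ U`, let `p` be `M'`-augmenting and
`N = M' ∆ p`, a matching with `|N| = |M| + k + 1`. While the current matching is smaller than `N`,
an augmenting path can be peeled off the symmetric difference with `N`, and each of these
`k + 1` edge-disjoint paths is `M`-augmenting; hence `M ∆ N = U ∆ p` has at least
`(k + 1)(2ℓ + 1)` edges. As `|U ∆ p| = k(2ℓ + 1) + |p| - 2|U ∩ p|`, this gives `|p| ≥ 2ℓ + 1`,
with equality only if `p` shares no edge with `U`. A vertex that `p` shares with a path of the
family is `M'`-matched by an edge of `U`, which `p` then contains; so in the equality case `p` is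
an `M`-augmenting path of length `2ℓ + 1` disjoint from the family, against maximality. Since `p`
has odd length, `|p| ≥ 2ℓ + 3`.
-/

open SimpleGraph

variable {V : Type*} [Fintype V] [DecidableEq V]

lemma List.isChain_alt_congr {α : Type*} {A B : Set α} {l : List α}
    (h : ∀ e ∈ l, e ∈ A ↔ e ∈ B) :
    l.IsChain (fun e₁ e₂ => (e₁ ∈ A ↔ e₂ ∉ A)) ↔ l.IsChain (fun e₁ e₂ => (e₁ ∈ B ↔ e₂ ∉ B)) :=
  List.IsChain.iff_of_mem_imp fun e f he hf => by rw [h e he, h f hf]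

lemma Set.ncard_symmDiff_add_two_mul_ncard_inter {α : Type*} (s t : Set α)
    (hs : s.Finite := by toFinite_tac) (ht : t.Finite := by toFinite_tac) :
    (symmDiff s t).ncard + 2 * (s ∩ t).ncard = s.ncard + t.ncard := by
  rw [Set.symmDiff_def, Set.ncard_union_eq disjoint_sdiff_sdiff hs.sdiff ht.sdiff]
  have hs' := Set.ncard_inter_add_ncard_sdiff_eq_ncard s t hs
  have ht' := Set.ncard_inter_add_ncard_sdiff_eq_ncard t s ht
  rw [Set.inter_comm] at ht'
  omega

lemma Set.symmDiff_sdiff_singleton_subset {α : Type*} {K N : Set α} {f g : α} (hf : f ∉ N)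
    (hg : g ∉ K) : symmDiff (K \ {f}) (N \ {g}) ⊆ symmDiff K N := by
  intro e he
  simp only [Set.mem_symmDiff, Set.mem_sdiff, Set.mem_singleton_iff] at he ⊢
  by_cases hef : e = f
  · subst hef
    tauto
  · by_cases heg : e = g
    · subst heg
      tauto
    · tauto

section

variable {V : Type*} {G : SimpleGraph V} {M N U : Set (Sym2 V)} {a b c d v : V}

lemma IsMatching.mono_s2 (hM : IsMatching G M) (hNM : N ⊆ M) : IsMatching G N :=
  ⟨hNM.trans hM.1, fun v e₁ h₁ e₂ h₂ => hM.2 v e₁ (hNM h₁) e₂ (hNM h₂)⟩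

lemma IsMatching.insert (hM : IsMatching G M) (hab : G.Adj a b) (ha : IsFree M a)
    (hb : IsFree M b) : IsMatching G (insert s(a, b) M) := by
  have hfree : ∀ v ∈ s(a, b), IsFree M v := by
    intro v hv
    rcases Sym2.mem_iff.mp hv with rfl | rfl
    exacts [ha, hb]
  refine ⟨Set.insert_subset hab hM.1, ?_⟩
  rintro v e₁ (rfl | h₁) e₂ (rfl | h₂) hv₁ hv₂
  · rfl
  · exact absurd hv₂ (hfree v hv₁ e₂ h₂)
  · exact absurd hv₁ (hfree v hv₂ e₁ h₁)
  · exact hM.2 v e₁ h₁ e₂ h₂ hv₁ hv₂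

lemma IsMatching.isFree_sdiff_singleton {e : Sym2 V} (hM : IsMatching G M) (he : e ∈ M)
    (hv : v ∈ e) : IsFree (M \ {e}) v :=
  fun f hf hvf => hf.2 (hM.2 v f hf.1 e he hvf hv)

lemma IsFree.of_sdiff_singleton {e : Sym2 V} (hv : IsFree (M \ {e}) v) (hve : v ∉ e) :
    IsFree M v :=
  fun f hf hvf => hv f ⟨hf, fun h => hve (h ▸ hvf)⟩ hvf

lemma IsMatching.ncard_verts [Finite V] (hM : IsMatching G M) :
    {v | ∃ e ∈ M, v ∈ e}.ncard = 2 * M.ncard := by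
  classical
  have hfin := Set.toFinite M
  have hverts : {v | ∃ e ∈ M, v ∈ e} = ↑(hfin.toFinset.biUnion Sym2.toFinset) := by
    ext v
    simp
  rw [hverts, Set.ncard_coe_finset, Finset.card_biUnion, Set.ncard_eq_toFinset_card M hfin,
    Finset.sum_const_nat (m := 2), mul_comm]
  · intro e he
    exact Sym2.card_toFinset_of_not_isDiag e
      (G.not_isDiag_of_mem_edgeSet (hM.1 ((Set.Finite.mem_toFinset hfin).mp he)))
  · intro e he f hf hef
    simp only [Finset.mem_coe, Set.Finite.mem_toFinset] at he hf
    rw [Function.onFun, Finset.disjoint_left]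
    intro v hve hvf
    exact hef (hM.2 v e he f hf (Sym2.mem_toFinset.mp hve) (Sym2.mem_toFinset.mp hvf))

lemma isFree_symmDiff_iff (hv : ∀ e ∈ U, v ∉ e) :
    IsFree (symmDiff M U) v ↔ IsFree M v := by
  simp only [IsFree, Set.mem_symmDiff]
  constructor
  · exact fun h e he hve => h e (Or.inl ⟨he, fun heU => hv e heU hve⟩) hve
  · rintro h e (⟨he, -⟩ | ⟨he, -⟩)
    exacts [h e he, hv e he]

lemma IsFree.mk_notMem (ha : IsFree M a) (b : V) : s(a, b) ∉ M :=
  fun h => ha _ h (Sym2.mem_mk_left a b)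

theorem SimpleGraph.Walk.IsPath.ncard_edgeSet {p : G.Walk a b}
    (hp : p.IsPath) : p.edgeSet.ncard = p.length := by
  classical
  rw [← Walk.coe_edges_toFinset, Set.ncard_coe_finset, List.toFinset_card_of_nodup hp.edges_nodup,
    Walk.length_edges]

lemma IsAugPath.isFree_start {p : G.Walk a b} (hp : IsAugPath M p) : IsFree M a := hp.2.1

lemma IsAugPath.isFree_end {p : G.Walk a b} (hp : IsAugPath M p) : IsFree M b := hp.2.2.1

lemma IsAugPath.ne {p : G.Walk a b} (hp : IsAugPath M p) : a ≠ b := hp.2.2.2.1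

lemma IsAugPath.congr {p : G.Walk a b} (hp : IsAugPath M p)
    (hE : ∀ e ∈ p.edges, e ∈ M ↔ e ∈ N) (ha : IsFree N a) (hb : IsFree N b) : IsAugPath N p := by
  obtain ⟨⟨hpath, hchain⟩, -, -, hab, hhead, hlast⟩ := hp
  refine ⟨⟨hpath, (List.isChain_alt_congr hE).mp hchain⟩, ha, hb, hab, fun e he => ?_,
    fun e he => ?_⟩
  · rw [← hE e (List.mem_of_mem_head? he)]
    exact hhead e he
  · rw [← hE e (List.mem_of_mem_getLast? he)]
    exact hlast e he

lemma IsAugPath.reverse {p : G.Walk a b} (hp : IsAugPath M p) : IsAugPath M p.reverse := by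
  obtain ⟨⟨hpath, hchain⟩, ha, hb, hab, hhead, hlast⟩ := hp
  refine ⟨⟨hpath.reverse, ?_⟩, hb, ha, hab.symm, ?_, ?_⟩
  · rw [Walk.edges_reverse]
    exact List.isChain_reverse.mpr (List.IsChain.imp (fun _ _ h => by tauto) hchain)
  · simpa [Walk.edges_reverse, List.head?_reverse] using hlast
  · simpa [Walk.edges_reverse, List.getLast?_reverse] using hhead

lemma isAugPath_cons_nil (h : G.Adj a b) (ha : IsFree M a) (hb : IsFree M b) :
    IsAugPath M (.cons h .nil) := by
  have hab : s(a, b) ∉ M := ha.mk_notMem b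
  refine ⟨⟨by simp [Walk.isPath_def, G.ne_of_adj h], List.isChain_singleton _⟩, ha, hb,
    G.ne_of_adj h, ?_, ?_⟩ <;> simpa using hab

lemma IsAugPath.of_cons_cons {h₁ : G.Adj a c} {h₂ : G.Adj c d} {q : G.Walk d b}
    (hM : IsMatching G M) (hp : IsAugPath M (.cons h₁ (.cons h₂ q))) :
    s(c, d) ∈ M ∧ a ∉ q.support ∧ c ∉ q.support ∧ IsAugPath (M \ {s(c, d)}) q := by
  obtain ⟨⟨hpath, (hchain : List.IsChain _ _)⟩, ha, hb, -, -, hlast⟩ := hp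
  have hsupp := hpath.support_nodup
  simp only [Walk.support_cons, List.nodup_cons, List.mem_cons, not_or] at hsupp
  simp only [Walk.edges_cons, List.isChain_cons_cons] at hchain hlast
  have hcd : s(c, d) ∈ M := by
    have := ha.mk_notMem c
    tauto
  have hcdq : s(c, d) ∉ q.edges := fun h => hsupp.2.1 (q.fst_mem_support_of_mem_edges h)
  have hq : ∀ e ∈ q.edges, e ∈ M \ {s(c, d)} ↔ e ∈ M := fun e he => by
    simp [ne_of_mem_of_not_mem he hcdq]
  have hdb : d ≠ b := by
    rintro rfl
    exact hb _ hcd (Sym2.mem_mk_right c d)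
  refine ⟨hcd, hsupp.1.2, hsupp.2.1, ⟨hpath.of_cons.of_cons, ?_⟩,
    hM.isFree_sdiff_singleton hcd (Sym2.mem_mk_right c d), fun e he => hb e he.1, hdb, ?_, ?_⟩
  · exact (List.isChain_alt_congr hq).mpr hchain.2.tail
  · exact fun e he heM => ((List.isChain_cons.mp hchain.2).1 e he).mp hcd heM.1
  · exact fun e he heM => hlast e (by simp [List.getLast?_cons, he]) heM.1

lemma IsAugPath.cons_cons (h₁ : G.Adj a c) (h₂ : G.Adj c d) {q : G.Walk d b}
    (hq : IsAugPath (M \ {s(c, d)}) q) (hcd : s(c, d) ∈ M) (ha : IsFree M a)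
    (haq : a ∉ q.support) (hcq : c ∉ q.support) : IsAugPath M (.cons h₁ (.cons h₂ q)) := by
  obtain ⟨⟨hpath, hchain⟩, -, hb, hdb, hhead, hlast⟩ := hq
  have hcdq : s(c, d) ∉ q.edges := fun h => hcq (q.fst_mem_support_of_mem_edges h)
  have hE : ∀ e ∈ q.edges, e ∈ M \ {s(c, d)} ↔ e ∈ M := fun e he => by
    simp [ne_of_mem_of_not_mem he hcdq]
  have hbq := q.end_mem_support
  have hbcd : b ∉ s(c, d) := by
    rw [Sym2.mem_iff]
    rintro (rfl | rfl)
    exacts [hcq hbq, hdb rfl]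
  have hac : s(a, c) ∉ M := ha.mk_notMem c
  refine ⟨⟨(hpath.cons hcq).cons ?_, (?_ : List.IsChain _ _)⟩, ha, ?_, fun h => haq (h ▸ hbq),
    ?_, ?_⟩
  · simp [G.ne_of_adj h₁, haq]
  · simp only [Walk.edges_cons, List.isChain_cons]
    refine ⟨by simp [hac, hcd], fun e he => ?_, (List.isChain_alt_congr hE).mp hchain⟩
    have := hhead e he
    rw [hE e (List.mem_of_mem_head? he)] at this
    simp [hcd, this]
  · exact hb.of_sdiff_singleton hbcd
  · simpa using hac
  · intro e he
    cases hf : q.edges.getLast? with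
    | none => exact absurd (Walk.edges_eq_nil.mp (List.getLast?_eq_none_iff.mp hf)).eq hdb
    | some f =>
      obtain rfl : f = e := by simpa [List.getLast?_cons, hf] using he
      rw [← hE f (List.mem_of_mem_getLast? hf)]
      exact hlast f hf

lemma IsAugPath.symmDiff_edgeSet_cons_cons {h₁ : G.Adj a c} {h₂ : G.Adj c d} {q : G.Walk d b}
    (hM : IsMatching G M) (hp : IsAugPath M (.cons h₁ (.cons h₂ q))) :
    symmDiff M (Walk.cons h₁ (.cons h₂ q)).edgeSet =
      insert s(a, c) (symmDiff (M \ {s(c, d)}) q.edgeSet) := by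
  obtain ⟨hcd, haq, hcq, -⟩ := hp.of_cons_cons hM
  have hac : s(a, c) ∉ M := hp.isFree_start.mk_notMem c
  have hacq : s(a, c) ∉ q.edges := fun h => haq (q.fst_mem_support_of_mem_edges h)
  have hcdq : s(c, d) ∉ q.edges := fun h => hcq (q.fst_mem_support_of_mem_edges h)
  ext e
  simp only [Set.mem_symmDiff, Walk.edgeSet_cons, Set.mem_insert_iff, Walk.mem_edgeSet,
    Set.mem_sdiff, Set.mem_singleton_iff]
  by_cases he₁ : e = s(a, c)
  · subst he₁
    tauto
  · by_cases he₂ : e = s(c, d)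
    · subst he₂
      tauto
    · tauto

lemma IsAugPath.symmDiff_edgeSet_cons_nil {h : G.Adj a b} (hp : IsAugPath M (.cons h .nil)) :
    symmDiff M (Walk.cons h .nil).edgeSet = insert s(a, b) M := by
  have hab : s(a, b) ∉ M := hp.isFree_start.mk_notMem b
  ext e
  simp only [Set.mem_symmDiff, Walk.edgeSet_cons, Walk.edgeSet_nil, Set.mem_insert_iff,
    Set.mem_empty_iff_false, or_false]
  by_cases he : e = s(a, b)
  · subst he
    tauto
  · tauto

theorem IsAugPath.isMatching_symmDiff : ∀ {M : Set (Sym2 V)} {a b : V} {p : G.Walk a b},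
    IsMatching G M → IsAugPath M p → IsMatching G (symmDiff M p.edgeSet)
  | _, _, _, .nil, _, hp => absurd rfl hp.ne
  | M, a, b, .cons h .nil, hM, hp => by
    rw [hp.symmDiff_edgeSet_cons_nil]
    exact hM.insert h hp.isFree_start hp.isFree_end
  | M, a, b, .cons (v := c) h₁ (.cons (v := d) h₂ q), hM, hp => by
    obtain ⟨hcd, haq, hcq, hq⟩ := hp.of_cons_cons hM
    rw [hp.symmDiff_edgeSet_cons_cons hM]
    refine (IsAugPath.isMatching_symmDiff (hM.mono_s2 Set.sdiff_subset) hq).insert h₁ ?_ ?_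
    · exact (isFree_symmDiff_iff fun e he hae => haq (Walk.mem_support_of_mem_edges he hae)).mpr
        fun e he => hp.isFree_start e he.1
    · exact (isFree_symmDiff_iff fun e he hce => hcq (Walk.mem_support_of_mem_edges he hce)).mpr
        (hM.isFree_sdiff_singleton hcd (Sym2.mem_mk_left c _))

theorem IsAugPath.ncard_symmDiff [Finite V] : ∀ {M : Set (Sym2 V)} {a b : V} {p : G.Walk a b},
    IsMatching G M → IsAugPath M p → (symmDiff M p.edgeSet).ncard = M.ncard + 1
  | _, _, _, .nil, _, hp => absurd rfl hp.ne
  | M, a, b, .cons h .nil, _, hp => by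
    have hab : s(a, b) ∉ M := hp.isFree_start.mk_notMem b
    rw [hp.symmDiff_edgeSet_cons_nil, Set.ncard_insert_of_notMem hab]
  | M, a, b, .cons (v := c) h₁ (.cons (v := d) h₂ q), hM, hp => by
    obtain ⟨hcd, haq, -, hq⟩ := hp.of_cons_cons hM
    have hac : s(a, c) ∉ symmDiff (M \ {s(c, d)}) q.edgeSet := by
      rintro (⟨hac, -⟩ | ⟨hac, -⟩)
      · exact hp.isFree_start.mk_notMem c hac.1
      · exact haq (q.fst_mem_support_of_mem_edges hac)
    rw [hp.symmDiff_edgeSet_cons_cons hM, Set.ncard_insert_of_notMem hac,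
      IsAugPath.ncard_symmDiff (hM.mono_s2 Set.sdiff_subset) hq, Set.ncard_sdiff_singleton_add_one hcd]

theorem IsAugPath.exists_mem_edges_notMem : ∀ {M : Set (Sym2 V)} {a b : V} {p : G.Walk a b},
    IsMatching G M → IsAugPath M p → ∀ v ∈ p.support, ∃ e ∈ p.edges, e ∉ M ∧ v ∈ e
  | _, _, _, .nil, _, hp => absurd rfl hp.ne
  | M, a, b, .cons h .nil, _, hp => fun v hv =>
    ⟨s(a, b), by simp, hp.isFree_start.mk_notMem b, by simpa [Sym2.mem_iff] using hv⟩
  | M, a, b, .cons (v := c) h₁ (.cons (v := d) h₂ q), hM, hp => by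
    obtain ⟨-, -, hcq, hq⟩ := hp.of_cons_cons hM
    have hac : s(a, c) ∉ M := hp.isFree_start.mk_notMem c
    intro v hv
    simp only [Walk.support_cons, List.mem_cons] at hv
    rcases hv with rfl | rfl | hv
    · exact ⟨_, by simp, hac, Sym2.mem_mk_left _ _⟩
    · exact ⟨_, by simp, hac, Sym2.mem_mk_right _ _⟩
    · obtain ⟨e, he, heM, hve⟩ :=
        IsAugPath.exists_mem_edges_notMem (hM.mono_s2 Set.sdiff_subset) hq v hv
      refine ⟨e, by simp [he], fun heM' => heM ⟨heM', ?_⟩, hve⟩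
      rintro rfl
      exact hcq (q.fst_mem_support_of_mem_edges he)

theorem IsAugPath.odd_length : ∀ {M : Set (Sym2 V)} {a b : V} {p : G.Walk a b},
    IsMatching G M → IsAugPath M p → Odd p.length
  | _, _, _, .nil, _, hp => absurd rfl hp.ne
  | _, _, _, .cons _ .nil, _, _ => by simp
  | _, _, _, .cons _ (.cons _ _), hM, hp => by
    obtain ⟨-, -, -, hq⟩ := hp.of_cons_cons hM
    simpa [add_assoc] using (IsAugPath.odd_length (hM.mono_s2 Set.sdiff_subset) hq).add_even even_two

lemma IsAugPath.not_isFree_symmDiff {p : G.Walk a b} (hM : IsMatching G M) (hp : IsAugPath M p)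
    (hv : v ∈ p.support) : ¬ IsFree (symmDiff M p.edgeSet) v := by
  obtain ⟨e, he, heM, hve⟩ := hp.exists_mem_edges_notMem hM v hv
  exact fun hfree => hfree e (Or.inr ⟨he, heM⟩) hve

lemma IsAugPath.isFree_of_isFree_symmDiff {p : G.Walk a b} (hM : IsMatching G M)
    (hp : IsAugPath M p) (hv : IsFree (symmDiff M p.edgeSet) v) : IsFree M v := by
  by_cases hvp : v ∈ p.support
  · exact absurd hv (hp.not_isFree_symmDiff hM hvp)
  · exact (isFree_symmDiff_iff fun e he hve => hvp (Walk.mem_support_of_mem_edges he hve)).mp hv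

lemma IsAugPath.mem_edges_of_mem {p : G.Walk a b} {g : Sym2 V} (hM : IsMatching G M)
    (hp : IsAugPath M p) (hg : g ∈ M) (hvg : v ∈ g) (hv : v ∈ p.support) : g ∈ p.edges := by
  by_contra hgp
  obtain ⟨e, he, heM, hve⟩ := hp.exists_mem_edges_notMem hM v hv
  have := (hp.isMatching_symmDiff hM).2 v g (Or.inl ⟨hg, hgp⟩) e (Or.inr ⟨he, heM⟩) hvg hve
  exact hgp (this ▸ he)

lemma IsAugPath.symmDiff_of_forall_notMem_support {p : G.Walk a b} (hp : IsAugPath M p)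
    (hU : ∀ e ∈ U, ∀ v ∈ e, v ∉ p.support) : IsAugPath (symmDiff M U) p := by
  have hoff : ∀ v ∈ p.support, ∀ e ∈ U, v ∉ e := fun v hv e he hve => hU e he v hve hv
  refine hp.congr (fun e he => ?_)
    ((isFree_symmDiff_iff (hoff a p.start_mem_support)).mpr hp.isFree_start)
    ((isFree_symmDiff_iff (hoff b p.end_mem_support)).mpr hp.isFree_end)
  have heU : e ∉ U := fun heU =>
    hU e heU _ (Sym2.out_fst_mem e) (Walk.mem_support_of_mem_edges he (Sym2.out_fst_mem e))
  simp [Set.mem_symmDiff, heU]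

lemma IsAugPath.disjoint_support_of_disjoint_edges {q : G.Walk c d} {p : G.Walk a b}
    (hM : IsMatching G M) (hq : IsAugPath M q) (hqU : ∀ e ∈ q.edges, e ∈ U)
    (hMU : IsMatching G (symmDiff M U)) (hp : IsAugPath (symmDiff M U) p)
    (hpU : ∀ e ∈ U, e ∉ p.edges) : ∀ v ∈ q.support, v ∉ p.support := by
  intro v hvq hvp
  obtain ⟨g, hg, hgM, hvg⟩ := hq.exists_mem_edges_notMem hM v hvq
  exact hpU g (hqU g hg) (hp.mem_edges_of_mem hMU (Or.inr ⟨hqU g hg, hgM⟩) hvg hvp)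

lemma IsMatching.exists_isFree_of_ncard_lt [Finite V] {K : Set (Sym2 V)} (hK : IsMatching G K)
    (hN : IsMatching G N) (hlt : K.ncard < N.ncard) : ∃ x y, s(x, y) ∈ N ∧ IsFree K x := by
  have hverts : {v | ∃ e ∈ K, v ∈ e}.ncard < {v | ∃ e ∈ N, v ∈ e}.ncard := by
    rw [hK.ncard_verts, hN.ncard_verts]
    omega
  obtain ⟨x, ⟨e, heN, hxe⟩, hxK⟩ := Set.exists_mem_notMem_of_ncard_lt_ncard hverts
  obtain ⟨y, rfl⟩ := Sym2.mem_iff_exists.mp hxe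
  exact ⟨x, y, heN, fun f hf hxf => hxK ⟨f, hf, hxf⟩⟩

lemma IsAugPath.notMem_support {p : G.Walk a b} (hM : IsMatching G M) (hp : IsAugPath M p)
    (hpE : p.edgeSet ⊆ symmDiff M N) (hvM : IsFree M v) (hvN : IsFree N v) : v ∉ p.support := by
  intro hv
  obtain ⟨e, he, -, hve⟩ := hp.exists_mem_edges_notMem hM v hv
  rcases hpE he with ⟨heM, -⟩ | ⟨heN, -⟩
  exacts [hvM e heM hve, hvN e heN hve]

lemma exists_isAugPath_of_sdiff {K N : Set (Sym2 V)} {x y z u w : V} (hK : IsMatching G K)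
    (hN : IsMatching G N) (hxy : G.Adj x y) (hyz : G.Adj y z) (hxyN : s(x, y) ∈ N)
    (hyzK : s(y, z) ∈ K) (hx : IsFree K x) {P : G.Walk u w} (hP : IsAugPath (K \ {s(y, z)}) P)
    (hPE : P.edgeSet ⊆ symmDiff (K \ {s(y, z)}) (N \ {s(x, y)})) :
    ∃ (a b : V) (p : G.Walk a b), IsAugPath K p ∧ p.edgeSet ⊆ symmDiff K N := by
  have hxyK : s(x, y) ∉ K := hx.mk_notMem y
  have hyzN : s(y, z) ∉ N := fun h => hxyK
    (hN.2 y _ hxyN _ h (Sym2.mem_mk_right x y) (Sym2.mem_mk_left y z) ▸ hyzK)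
  have hK' := hK.mono_s2 (Set.sdiff_subset (t := {s(y, z)}))
  have hxP : x ∉ P.support := hP.notMem_support hK' hPE (fun e he => hx e he.1)
    (hN.isFree_sdiff_singleton hxyN (Sym2.mem_mk_left x y))
  have hyP : y ∉ P.support := hP.notMem_support hK' hPE
    (hK.isFree_sdiff_singleton hyzK (Sym2.mem_mk_left y z))
    (hN.isFree_sdiff_singleton hxyN (Sym2.mem_mk_right x y))
  have hPE' : P.edgeSet ⊆ symmDiff K N := hPE.trans (Set.symmDiff_sdiff_singleton_subset hyzN hxyK)
  have hext : ∀ {w'} (Q : G.Walk z w'), Q.edgeSet = P.edgeSet →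
      (Walk.cons hxy (.cons hyz Q)).edgeSet ⊆ symmDiff K N := by
    intro w' Q hQ
    simp only [Walk.edgeSet_cons, Set.insert_subset_iff, hQ]
    exact ⟨Or.inr ⟨hxyN, hxyK⟩, Or.inl ⟨hyzK, hyzN⟩, hPE'⟩
  by_cases hzu : z = u
  · subst hzu
    exact ⟨x, w, _, hP.cons_cons hxy hyz hyzK hx hxP hyP, hext P rfl⟩
  by_cases hzw : z = w
  · subst hzw
    refine ⟨x, u, _, hP.reverse.cons_cons hxy hyz hyzK hx (by simpa) (by simpa), hext _ ?_⟩
    ext e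
    simp [Walk.mem_edgeSet]
  have hoff : ∀ v ∈ P.support, v ≠ z → v ∉ s(y, z) := by
    intro v hv hvz
    rw [Sym2.mem_iff]
    rintro (rfl | rfl)
    exacts [hyP hv, hvz rfl]
  refine ⟨u, w, P, hP.congr (fun e he => ?_)
    (hP.isFree_start.of_sdiff_singleton (hoff u P.start_mem_support (Ne.symm hzu)))
    (hP.isFree_end.of_sdiff_singleton (hoff w P.end_mem_support (Ne.symm hzw))), hPE'⟩
  have : e ≠ s(y, z) := fun h => hyP (P.fst_mem_support_of_mem_edges (h ▸ he))
  simp [this]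

theorem exists_isAugPath_of_ncard_lt [Finite V] {K N : Set (Sym2 V)} (hK : IsMatching G K)
    (hN : IsMatching G N) (hlt : K.ncard < N.ncard) :
    ∃ (a b : V) (p : G.Walk a b), IsAugPath K p ∧ p.edgeSet ⊆ symmDiff K N := by
  obtain ⟨x, y, hxyN, hx⟩ := hK.exists_isFree_of_ncard_lt hN hlt
  have hxy : G.Adj x y := hN.1 hxyN
  by_cases hy : IsFree K y
  · refine ⟨x, y, .cons hxy .nil, isAugPath_cons_nil hxy hx hy, ?_⟩
    have hxyK : s(x, y) ∉ K := hx.mk_notMem y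
    simp [Set.mem_symmDiff, hxyN, hxyK]
  obtain ⟨f, hfK, hyf⟩ : ∃ f ∈ K, y ∈ f := by simpa [IsFree] using hy
  obtain ⟨z, rfl⟩ := Sym2.mem_iff_exists.mp hyf
  -- Dropping `xy` from `N` and `yz` from `K` keeps `|K| < |N|`; a path found there is either
  -- already `K`-augmenting or is prolonged by `x y z`.
  have hlt' : (K \ {s(y, z)}).ncard < (N \ {s(x, y)}).ncard := by
    have := Set.ncard_sdiff_singleton_add_one hfK
    have := Set.ncard_sdiff_singleton_add_one hxyN
    omega
  obtain ⟨u, w, P, hP, hPE⟩ :=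
    exists_isAugPath_of_ncard_lt (hK.mono_s2 Set.sdiff_subset) (hN.mono_s2 Set.sdiff_subset) hlt'
  exact exists_isAugPath_of_sdiff hK hN hxy (hK.1 hfK) hxyN hfK hx hP hPE
termination_by K.ncard
decreasing_by exact Set.ncard_sdiff_singleton_lt_of_mem hfK

/- `K` is `M` augmented along the paths extracted so far; the hypotheses on `K` are the invariant
that makes the next extracted path `M`-augmenting. -/
theorem mul_le_ncard_symmDiff [Finite V] (hN : IsMatching G N) {L : ℕ}
    (hmin : ∀ (a b : V) (p : G.Walk a b), IsAugPath M p → L ≤ p.length) :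
    ∀ (d : ℕ) {K : Set (Sym2 V)}, IsMatching G K → (∀ e ∈ symmDiff K N, e ∈ K ↔ e ∈ M) →
      (∀ v, IsFree K v → IsFree M v) → K.ncard + d ≤ N.ncard → d * L ≤ (symmDiff K N).ncard
  | 0, _, _, _, _, _ => by simp
  | d + 1, K, hK, hKM, hfree, hcard => by
    obtain ⟨a, b, p, hp, hpE⟩ := exists_isAugPath_of_ncard_lt hK hN (by omega)
    have hL : L ≤ p.length := hmin a b p <|
      hp.congr (fun e he => hKM e (hpE he)) (hfree a hp.isFree_start) (hfree b hp.isFree_end)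
    have hK' : symmDiff (symmDiff K p.edgeSet) N = symmDiff K N \ p.edgeSet := by
      rw [symmDiff_right_comm, symmDiff_of_ge hpE]
    have ih := mul_le_ncard_symmDiff hN hmin d (hp.isMatching_symmDiff hK)
      (fun e he => ?_) (fun v hv => hfree v (hp.isFree_of_isFree_symmDiff hK hv))
      (by rw [hp.ncard_symmDiff hK]; omega)
    · have hsplit := Set.ncard_sdiff_add_ncard_of_subset hpE
      rw [hK'] at ih
      rw [hp.1.1.ncard_edgeSet] at hsplit
      rw [add_mul, one_mul]
      omega
    · rw [hK'] at he
      rw [← hKM e he.1]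
      simp [Set.mem_symmDiff, he.2]

variable {ι : Type*} {A : ι → (a : V) × (b : V) × G.Walk a b}

theorem isMatching_and_ncard_symmDiff_augPaths [Finite V] (hM : IsMatching G M)
    (hA : ∀ i, IsAugPath M (A i).2.2)
    (hdisj : ∀ i j, i ≠ j → ∀ v ∈ (A i).2.2.support, v ∉ (A j).2.2.support) (s : Finset ι) :
    IsMatching G (symmDiff M {e | ∃ i ∈ s, e ∈ (A i).2.2.edges}) ∧
      (symmDiff M {e | ∃ i ∈ s, e ∈ (A i).2.2.edges}).ncard = M.ncard + s.card := by
  classical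
  induction s using Finset.induction_on with
  | empty => simpa [← Set.bot_eq_empty] using hM
  | insert j s hj ih =>
    obtain ⟨hmatch, hcard⟩ := ih
    have hoff : ∀ e ∈ {e | ∃ i ∈ s, e ∈ (A i).2.2.edges}, ∀ v ∈ e, v ∉ (A j).2.2.support := by
      rintro e ⟨i, hi, he⟩ v hve
      exact hdisj i j (by rintro rfl; exact hj hi) v (Walk.mem_support_of_mem_edges he hve)
    have hdisjoint : Disjoint {e | ∃ i ∈ s, e ∈ (A i).2.2.edges} (A j).2.2.edgeSet :=
      Set.disjoint_left.mpr fun e heU he =>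
        hoff e heU _ (Sym2.out_fst_mem e) (Walk.mem_support_of_mem_edges he (Sym2.out_fst_mem e))
    have hU : {e | ∃ i ∈ insert j s, e ∈ (A i).2.2.edges} =
        symmDiff {e | ∃ i ∈ s, e ∈ (A i).2.2.edges} (A j).2.2.edgeSet := by
      rw [hdisjoint.symmDiff_eq_sup]
      ext e
      simp only [Finset.mem_insert, Set.sup_eq_union, Set.mem_union,
        Walk.mem_edgeSet]
      grind
    have hAj := (hA j).symmDiff_of_forall_notMem_support hoff
    rw [hU, ← symmDiff_assoc, Finset.card_insert_of_notMem hj, hAj.ncard_symmDiff hmatch, hcard]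
    exact ⟨hAj.isMatching_symmDiff hmatch, rfl⟩

theorem ncard_setOf_exists_mem_edges [Fintype ι] (hA : ∀ i, (A i).2.2.IsPath)
    (hdisj : ∀ i j, i ≠ j → ∀ v ∈ (A i).2.2.support, v ∉ (A j).2.2.support) :
    {e | ∃ i, e ∈ (A i).2.2.edges}.ncard = ∑ i, (A i).2.2.length := by
  classical
  have hU : {e | ∃ i, e ∈ (A i).2.2.edges} =
      ↑(Finset.univ.biUnion fun i => (A i).2.2.edges.toFinset) := by
    ext
    simp
  rw [hU, Set.ncard_coe_finset, Finset.card_biUnion]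
  · simp [List.toFinset_card_of_nodup (hA _).edges_nodup]
  · intro i _ j _ hij
    rw [Function.onFun, Finset.disjoint_left]
    intro e hei hej
    rw [List.mem_toFinset] at hei hej
    exact hdisj i j hij _ (Walk.mem_support_of_mem_edges hei (Sym2.out_fst_mem e))
      (Walk.mem_support_of_mem_edges hej (Sym2.out_fst_mem e))

end

/-- Augmenting along a maximal family of vertex-disjoint shortest augmenting paths
(of length `2ℓ+1`) yields a matching all of whose augmenting paths have length ≥ `2ℓ+3`. -/
theorem stmt2 (G : SimpleGraph V) (M : Set (Sym2 V)) (hM : IsMatching G M) (ℓ : ℕ)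
    (hmin : ∀ (a b : V) (p : G.Walk a b), IsAugPath M p → 2 * ℓ + 1 ≤ p.length)
    (k : ℕ) (A : Fin k → (a : V) × (b : V) × G.Walk a b)
    (hA : ∀ i, IsAugPath M (A i).2.2 ∧ (A i).2.2.length = 2 * ℓ + 1)
    (hdisj : ∀ i j, i ≠ j → ∀ v ∈ (A i).2.2.support, v ∉ (A j).2.2.support)
    (hmaximal : ∀ (a b : V) (p : G.Walk a b), IsAugPath M p → p.length = 2 * ℓ + 1 →
      ∃ i, ∃ v ∈ p.support, v ∈ (A i).2.2.support)
    (M' : Set (Sym2 V)) (hM' : M' = symmDiff M {e | ∃ i, e ∈ (A i).2.2.edges}) :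
    ∀ (a b : V) (p : G.Walk a b), IsAugPath M' p → 2 * ℓ + 3 ≤ p.length := by
  intro a b p hp
  subst hM'
  set U := {e | ∃ i, e ∈ (A i).2.2.edges}
  obtain ⟨hMU, hMUcard⟩ : IsMatching G (symmDiff M U) ∧ (symmDiff M U).ncard = M.ncard + k := by
    simpa using isMatching_and_ncard_symmDiff_augPaths hM (fun i => (hA i).1) hdisj Finset.univ
  have hUcard : U.ncard = k * (2 * ℓ + 1) := by
    simp [U, ncard_setOf_exists_mem_edges (fun i => (hA i).1.1.1) hdisj, (hA _).2]
  have hcount := mul_le_ncard_symmDiff (hp.isMatching_symmDiff hMU) hmin (k + 1) hM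
    (fun _ _ => Iff.rfl) (fun _ h => h) (by rw [hp.ncard_symmDiff hMU, hMUcard]; omega)
  rw [symmDiff_assoc, symmDiff_symmDiff_cancel_left] at hcount
  have hsymm := Set.ncard_symmDiff_add_two_mul_ncard_inter U p.edgeSet
  rw [hp.1.1.ncard_edgeSet, hUcard] at hsymm
  have hne : p.length ≠ 2 * ℓ + 1 := by
    intro hlen
    have hUp : ∀ e ∈ U, e ∉ p.edges := fun e heU hep => by
      have := (Set.ncard_pos (s := U ∩ p.edgeSet)).mpr ⟨e, heU, hep⟩
      nlinarith
    have hoff : ∀ i, ∀ v ∈ (A i).2.2.support, v ∉ p.support := fun i =>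
      (hA i).1.disjoint_support_of_disjoint_edges (U := U) hM (fun e he => ⟨i, he⟩) hMU hp hUp
    have hpM : IsAugPath M p := by
      simpa using hp.symmDiff_of_forall_notMem_support (U := U) fun e ⟨i, he⟩ v hve =>
        hoff i v (Walk.mem_support_of_mem_edges he hve)
    obtain ⟨i, v, hv, hvi⟩ := hmaximal a b p hpM hlen
    exact hoff i v hvi hv
  have hge : 2 * ℓ + 1 ≤ p.length := by nlinarith
  obtain ⟨r, hr⟩ := hp.odd_length hMU
  omega
end

section
/- For any vertex u with an orthodox predecessor u' (i.e., u' ∈ P(u)), the orthodox distance satisfies dist^α(u) > dist^α(u'); consequently, choosing for each non-root vertex a parent in P(u) yields a spanning tree (the alternating base tree) rooted at the super free vertex f. -/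
open SimpleGraph
open scoped Classical

variable {V : Type*} [Fintype V] [DecidableEq V]

/-- A matching system `(G, M)` in which a super free vertex `f` has been added:
`U` is the set of free vertices of the original system, and for each `u ∈ U`
the vertex `mid u` forms the length-two alternating path `f - mid u - u`
(with `{f, mid u} ∉ M` and `{mid u, u} ∈ M`).  After the addition, `f` is the
unique free vertex. -/
structure Sys (V : Type*) [Fintype V] [DecidableEq V] where
  G : SimpleGraph V
  M : Set (Sym2 V)
  f : V
  U : Set V
  mid : V → V
  M_sub : M ⊆ G.edgeSet
  matching : ∀ v : V, ∀ e₁ ∈ M, ∀ e₂ ∈ M, v ∈ e₁ → v ∈ e₂ → e₁ = e₂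
  f_free : ∀ e ∈ M, f ∉ e
  others_matched : ∀ v : V, v ≠ f → ∃ e ∈ M, v ∈ e
  U_spec : ∀ u ∈ U, G.Adj f (mid u) ∧ s(f, mid u) ∉ M ∧ G.Adj (mid u) u ∧ s(mid u, u) ∈ M
  mid_deg : ∀ u ∈ U, ∀ w : V, G.Adj (mid u) w → w = f ∨ w = u
  f_adj : ∀ w : V, G.Adj f w → ∃ u ∈ U, w = mid u
  mid_inj : ∀ u ∈ U, ∀ u' ∈ U, mid u = mid u' → u = u'

namespace Sys

variable (S : Sys V)

/-- An alternating path of the matching system: a simple path whose consecutive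
edges alternate membership in `M`. -/
def IsAltPath {a b : V} (p : S.G.Walk a b) : Prop :=
  p.IsPath ∧ List.Chain' (fun e₁ e₂ => (e₁ ∈ S.M ↔ e₂ ∉ S.M)) p.edges

/-- `adist S θ u` is the length of a shortest alternating path from `f` to `u`
whose length has parity `θ` (`true` = odd, `false` = even); `⊤` if none exists. -/
noncomputable def adist (θ : Bool) (u : V) : ℕ∞ :=
  sInf {n : ℕ∞ | ∃ p : S.G.Walk S.f u,
    S.IsAltPath p ∧ (p.length : ℕ∞) = n ∧ (Odd p.length ↔ θ = true)}

/-- The orthodox parity `α(u)` of `u`: the parity with smaller alternating distance. -/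
noncomputable def op (u : V) : Bool :=
  if S.adist true u < S.adist false u then true else false

/-- The orthodox distance `dist^α(u)`. -/
noncomputable def distOrth (u : V) : ℕ∞ := S.adist (S.op u) u

/-- The unorthodox distance `dist^β(u)`. -/
noncomputable def distUnorth (u : V) : ℕ∞ := S.adist (!S.op u) u

/-- `ρ(e)`: `true` (= odd) iff `e` is a matching edge. -/
noncomputable def rho (e : Sym2 V) : Bool := if e ∈ S.M then true else false

/-- `EP(u)`: the set of edges `e` incident to `u` such that some shortest orthodox
alternating path from `f` to `u` terminates with `e`. -/
def EP (u : V) : Set (Sym2 V) :=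
  {e | ∃ p : S.G.Walk S.f u, S.IsAltPath p ∧ (p.length : ℕ∞) = S.distOrth u ∧
        p.edges.getLast? = some e}

/-- `P(u)`: the set of immediate predecessors of `u` on shortest orthodox
alternating paths. -/
def Pset (u : V) : Set V := {u' | s(u', u) ∈ S.EP u}

/-- `EP = ⋃_u EP(u)`. -/
def EPall : Set (Sym2 V) := ⋃ u : V, S.EP u

/-- The volume `vlevel(e) = dist^{ρ(e)}(y) + dist^{ρ(e)}(z) + 1` of an edge `e = {y,z}`. -/
noncomputable def vlevel (e : Sym2 V) : ℕ∞ :=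
  Sym2.lift ⟨fun y z => S.adist (S.rho e) y + S.adist (S.rho e) z + 1,
    fun y z => by ring⟩ e

/-- The height `hlevel(e) = max (dist^{ρ(e)}(y)) (dist^{ρ(e)}(z))` of an edge `e = {y,z}`. -/
noncomputable def hlevel (e : Sym2 V) : ℕ∞ :=
  Sym2.lift ⟨fun y z => max (S.adist (S.rho e) y) (S.adist (S.rho e) z),
    fun y z => max_comm _ _⟩ e

/-- The level `level(e) = n' · vlevel(e) + hlevel(e)` with `n' = |V| + 1 > |V|`,
giving the lexicographic order on (volume, height). -/
noncomputable def level (e : Sym2 V) : ℕ∞ :=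
  ((Fintype.card V + 1 : ℕ) : ℕ∞) * S.vlevel e + S.hlevel e

/-- An augmenting path: an alternating path connecting two distinct vertices of `U`,
starting and ending with non-matching edges. -/
def IsAugPath {a b : V} (p : S.G.Walk a b) : Prop :=
  S.IsAltPath p ∧ a ∈ S.U ∧ b ∈ S.U ∧ a ≠ b ∧
  (∀ e, p.edges.head? = some e → e ∉ S.M) ∧ (∀ e, p.edges.getLast? = some e → e ∉ S.M)

/-- The length of shortest augmenting paths of the system is `L`. -/
def ShortestAugLen (L : ℕ) : Prop :=
  (∃ a b : V, ∃ p : S.G.Walk a b, S.IsAugPath p ∧ p.length = L) ∧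
  (∀ a b : V, ∀ p : S.G.Walk a b, S.IsAugPath p → L ≤ p.length)

/-- Vertices of the alternating base DAG `H`: all vertices except `f` and its neighbors. -/
def inH (v : V) : Prop := v ≠ S.f ∧ ¬ S.G.Adj S.f v

/-- The edge relation of the alternating base DAG `H`: an edge from `u` to `v`
iff `v ∈ P(u)` (upward orientation); vertices of `U` are sinks. -/
def HStep (u v : V) : Prop := S.inH u ∧ S.inH v ∧ u ∉ S.U ∧ v ∈ S.Pset u

end Sys

/-- An alternating base tree of `S`: every non-root vertex has its parent chosen
from `P(u)`; the root is the super free vertex `f`. -/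
structure ABT (S : Sys V) where
  par : V → V
  par_f : par S.f = S.f
  par_mem : ∀ u : V, u ≠ S.f → par u ∈ S.Pset u

namespace ABT

variable {S : Sys V} (T : ABT S)

/-- `v` belongs to the subtree `T(t)` rooted at `t`. -/
def inSub (t v : V) : Prop := ∃ n : ℕ, T.par^[n] v = t

/-- `e` is a tree edge of `T`. -/
def IsTreeEdge (e : Sym2 V) : Prop := ∃ u : V, u ≠ S.f ∧ e = s(u, T.par u)

/-- `e` is an incoming edge of the subtree `T(t)`: a non-tree edge of `G` with
exactly one endpoint inside `T(t)`. -/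
def Incoming (t : V) (e : Sym2 V) : Prop :=
  e ∈ S.G.edgeSet ∧ ¬ T.IsTreeEdge e ∧
  ∃ y z : V, e = s(y, z) ∧ T.inSub t z ∧ ¬ T.inSub t y

/-- `e` is a minimum-level incoming edge (MIE) of `T(t)`. -/
def IsMIE (t : V) (e : Sym2 V) : Prop :=
  T.Incoming t e ∧ ∀ e', T.Incoming t e' → S.level e ≤ S.level e'

/-- `e` is a minimum-volume incoming edge of `T(t)`. -/
def IsMinVolIncoming (t : V) (e : Sym2 V) : Prop :=
  T.Incoming t e ∧ ∀ e', T.Incoming t e' → S.vlevel e ≤ S.vlevel e'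

/-- The level of a path w.r.t. `T`: the maximum level of its non-tree edges
(`0` if it contains none). -/
noncomputable def pathLevel {a b : V} (p : S.G.Walk a b) : ℕ∞ :=
  sSup {x : ℕ∞ | ∃ e ∈ p.edges, ¬ T.IsTreeEdge e ∧ x = S.level e}

/-- The volume of a path w.r.t. `T`: the maximum volume of its non-tree edges
(`0` if it contains none). -/
noncomputable def pathVlevel {a b : V} (p : S.G.Walk a b) : ℕ∞ :=
  sSup {x : ℕ∞ | ∃ e ∈ p.edges, ¬ T.IsTreeEdge e ∧ x = S.vlevel e}

end ABT

/-- An edge is crossable if its volume is `2ℓ+5` and some alternating base tree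
puts its endpoints into subtrees rooted at two distinct free vertices. -/
def Sys.Crossable (S : Sys V) (ℓ : ℕ) (e : Sym2 V) : Prop :=
  S.vlevel e = ((2 * ℓ + 5 : ℕ) : ℕ∞) ∧
  ∃ T : ABT S, ∃ y z : V, e = s(y, z) ∧
    ∃ uy ∈ S.U, ∃ uz ∈ S.U, uy ≠ uz ∧ T.inSub uy y ∧ T.inSub uz z

/-- `E*`: the set of crossable critical edges (crossable and not in `EP`). -/
def Sys.Estar (S : Sys V) (ℓ : ℕ) : Set (Sym2 V) :=
  {e | S.Crossable ℓ e ∧ e ∉ S.EPall}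

/-- A (directed) path in the alternating base DAG `H`. -/
structure HPath (S : Sys V) where
  verts : List V
  ne : verts ≠ []
  chain : verts.Chain' S.HStep
  mem : ∀ v ∈ verts, S.inH v
  nodup : verts.Nodup

/-- The first vertex of an `H`-path. -/
def HPath.first {S : Sys V} (P : HPath S) : V := P.verts.head P.ne

/-- The last vertex of an `H`-path. -/
def HPath.last {S : Sys V} (P : HPath S) : V := P.verts.getLast P.ne

/-- A double path `(P, Q, y, z)`: `{y,z} ∈ E*` and `P`, `Q` are vertex-disjoint
paths of `H` from `y` and `z` terminating at two distinct free vertices. -/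
structure DoublePath (S : Sys V) (ℓ : ℕ) where
  P : HPath S
  Q : HPath S
  y : V
  z : V
  hy : P.first = y
  hz : Q.first = z
  he : s(y, z) ∈ S.Estar ℓ
  hPU : P.last ∈ S.U
  hQU : Q.last ∈ S.U
  hne : P.last ≠ Q.last
  hdisj : ∀ v ∈ P.verts, v ∉ Q.verts

/-- `T` respects an `H`-path `P` if consecutive vertices of `P` are
child–parent pairs of `T`. -/
def ABT.RespectsPath {S : Sys V} (T : ABT S) (P : HPath S) : Prop :=
  P.verts.Chain' (fun u v => T.par u = v)

/-- `T` respects a double path if it respects both of its constituent paths. -/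
def ABT.RespectsDP {S : Sys V} {ℓ : ℕ} (T : ABT S) (D : DoublePath S ℓ) : Prop :=
  T.RespectsPath D.P ∧ T.RespectsPath D.Q

/-- An in-tree of `H` rooted at a free vertex: every non-root vertex has a unique
outgoing `H`-edge inside the tree and all vertices reach the root.  (Paths ending
at a free vertex are a special case.) -/
structure InTree (S : Sys V) where
  W : Set V
  root : V
  g : V → V
  root_W : root ∈ W
  root_U : root ∈ S.U
  step : ∀ v ∈ W, v ≠ root → S.HStep v (g v) ∧ g v ∈ W
  reach : ∀ v ∈ W, ∃ n : ℕ, g^[n] v = root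

lemma my_exists_concat {V : Type*} {G : SimpleGraph V} {a b : V} (p : G.Walk a b)
    (hp : p.edges ≠ []) :
    ∃ (x : V) (q : G.Walk a x) (h : G.Adj x b), p = q.concat h := by
  cases p with
  | nil => simp at hp
  | cons h p' => exact SimpleGraph.Walk.exists_cons_eq_concat h p'

lemma Sys.distOrth_le_adist (S : Sys V) (θ : Bool) (u : V) :
    S.distOrth u ≤ S.adist θ u := by
  by_cases hlt : S.adist true u < S.adist false u <;> cases θ <;>
    simp [Sys.distOrth, Sys.op, hlt, le_of_lt, le_of_not_gt]

lemma Sys.key (S : Sys V) {u u' : V} (h : u' ∈ S.Pset u) :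
    S.distOrth u' < S.distOrth u := by
  obtain ⟨p, ⟨hpath, hchain⟩, hlen, hlast⟩ := h
  have hne : p.edges ≠ [] := by
    intro h0; rw [h0] at hlast; simp at hlast
  obtain ⟨x, q, hadj, rfl⟩ := my_exists_concat p hne
  have hlast' : s(x, u) = s(u', u) := by simpa using hlast
  have hx : x = u' := by
    rcases Sym2.eq_iff.mp hlast' with ⟨h1, h2⟩ | ⟨h1, h2⟩
    · exact h1
    · subst h1; exact absurd hadj (S.G.irrefl)
  rw [← hx]
  have hqpath : q.IsPath := by
    rw [SimpleGraph.Walk.concat_eq_append] at hpath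
    exact hpath.of_append_left
  have hqchain : List.Chain' (fun e₁ e₂ => (e₁ ∈ S.M ↔ e₂ ∉ S.M)) q.edges := by
    rw [SimpleGraph.Walk.edges_concat, List.concat_eq_append] at hchain
    exact (List.isChain_append.mp hchain).1
  have h1 : S.adist (decide (Odd q.length)) x ≤ (q.length : ℕ∞) :=
    sInf_le ⟨q, ⟨hqpath, hqchain⟩, rfl, by simp⟩
  have h2 : S.distOrth x ≤ (q.length : ℕ∞) :=
    le_trans (S.distOrth_le_adist _ x) h1
  have h3 : ((q.concat hadj).length : ℕ∞) = (q.length : ℕ∞) + 1 := by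
    rw [SimpleGraph.Walk.length_concat]; push_cast; ring
  calc S.distOrth x ≤ (q.length : ℕ∞) := h2
    _ < (q.length : ℕ∞) + 1 := by
        exact lt_of_lt_of_le (by exact_mod_cast Nat.lt_succ_self q.length) le_rfl
    _ = S.distOrth u := by rw [← h3, hlen]

/-- For any vertex `u` with an orthodox predecessor `u' ∈ P(u)`, the orthodox distance
strictly decreases: `dist^α(u') < dist^α(u)`; consequently, choosing for each non-root
vertex a parent in `P(u)` yields a spanning tree rooted at `f` (every vertex reaches `f`
by iterating the parent map). -/
theorem stmt3 (S : Sys V) :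
    (∀ u u' : V, u' ∈ S.Pset u → S.distOrth u' < S.distOrth u) ∧
    (∀ par : V → V, par S.f = S.f → (∀ u : V, u ≠ S.f → par u ∈ S.Pset u) →
      ∀ u : V, ∃ n : ℕ, par^[n] u = S.f) := by
  constructor
  · intro u u' h; exact S.key h
  · intro par hf hmem u
    have wf : WellFounded (fun a b : V => S.distOrth a < S.distOrth b) :=
      InvImage.wf _ wellFounded_lt
    induction u using wf.induction with
    | _ v IH =>
      by_cases hv : v = S.f
      · exact ⟨0, hv⟩
      · obtain ⟨n, hn⟩ := IH (par v) (S.key (hmem v hv))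
        exact ⟨n + 1, by rw [Function.iterate_succ_apply]; exact hn⟩
end

section
/- Let T be an alternating base tree and t a vertex with dist^β(t) < ∞. Then there exists a minimum-level incoming edge e* of T(t) with e* ∉ EP(t). -/
open SimpleGraph
open scoped Classical

variable {V : Type*} [Fintype V] [DecidableEq V]

/-!
Let `Q` be a shortest unorthodox alternating path to `t`, of length `dist^β(t)`, and let
`{y, z}` be the edge along which `Q` enters `T(t)` for the last time, so that the rest `r`
of `Q` stays in `T(t)`. A shortest orthodox path `P` to `t` meets `T(t)` only in `t`,
because distances grow strictly down the tree, and its length `dist^α(t)` has the other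
parity than `|Q|`; so `P` followed by `r` backwards is an alternating path reaching `z` with
the parity `ρ({y, z})`. This gives `vlevel({y, z}) ≤ dist^α(t) + dist^β(t)` and
`hlevel({y, z}) ≤ dist^β(t)`. Conversely, an edge `{w, t} ∈ EP(t)` has `ρ = β(t)` and
`dist^β(w) + 1 ≥ dist^α(t)`, so its level is at least that bound. Hence either every
minimum-level incoming edge avoids `EP(t)`, or `{y, z}`, which is not in `EP(t)`, is one.
-/

namespace List

theorem prop_iff_odd_of_isChain {α : Type*} {P : α → Prop} {l₁ l₂ : List α} {a : α}
    (hc : (l₁ ++ a :: l₂).IsChain (fun x y => P x ↔ ¬ P y))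
    (hhead : ∀ x ∈ (l₁ ++ a :: l₂).head?, ¬ P x) :
    P a ↔ Odd l₁.length := by
  induction l₁ using List.reverseRecOn generalizing a l₂ with
  | nil => simpa using hhead a
  | append_singleton l b ih =>
    rw [List.append_assoc, List.singleton_append] at hc hhead
    have hba : P b ↔ ¬ P a := by
      rw [List.isChain_append] at hc
      exact (List.isChain_cons_cons.mp hc.2.1).1
    rw [List.length_append, List.length_singleton, Nat.odd_add_one, ← ih hc hhead, hba]
    tauto

end List

namespace SimpleGraph.Walk

theorem exists_eq_append_cons_of_end_mem {α : Type*} {G : SimpleGraph α} (P : α → Prop)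
    {a b : α} (p : G.Walk a b) (hb : P b) (hex : ∃ v ∈ p.support, ¬ P v) :
    ∃ (y z : α) (q : G.Walk a y) (hyz : G.Adj y z) (r : G.Walk z b),
      p = q.append (cons hyz r) ∧ ¬ P y ∧ ∀ v ∈ r.support, P v := by
  induction p with
  | nil =>
    obtain ⟨v, hv, hnv⟩ := hex
    rw [support_nil, List.mem_singleton] at hv
    exact absurd (hv ▸ hb) hnv
  | @cons u w b h q ih =>
    by_cases hq : ∀ v ∈ q.support, P v
    · have hu : ¬ P u := by
        obtain ⟨v, hv, hnv⟩ := hex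
        rcases List.mem_cons.mp (support_cons h q ▸ hv) with rfl | hv
        · exact hnv
        · exact absurd (hq v hv) hnv
      exact ⟨u, w, nil, h, q, rfl, hu, hq⟩
    · obtain ⟨y, z, q', hyz, r, rfl, hy, hr⟩ := ih hb (by simpa using hq)
      exact ⟨y, z, cons h q', hyz, r, (cons_append _ _ _).symm, hy, hr⟩

end SimpleGraph.Walk

namespace Sys

variable {S : Sys V}

theorem rho_eq_true_iff {e : Sym2 V} : S.rho e = true ↔ e ∈ S.M := by
  unfold rho
  split_ifs with h <;> simp [h]

theorem rho_eq_decide_iff {e : Sym2 V} {P : Prop} [Decidable P] :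
    S.rho e = decide P ↔ (e ∈ S.M ↔ P) := by
  rw [← rho_eq_true_iff]
  cases S.rho e <;> by_cases P <;> simp_all

theorem mem_M_iff_not_mem_M_of_rho_ne {e₁ e₂ : Sym2 V} (h : S.rho e₁ ≠ S.rho e₂) :
    e₁ ∈ S.M ↔ e₂ ∉ S.M := by
  rw [← rho_eq_true_iff, ← rho_eq_true_iff]
  revert h
  cases S.rho e₁ <;> cases S.rho e₂ <;> decide

theorem IsAltPath.of_append_left {a b c : V} {p : S.G.Walk a b} {q : S.G.Walk b c}
    (h : S.IsAltPath (p.append q)) : S.IsAltPath p := by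
  have hc : (p.edges ++ q.edges).IsChain _ := Walk.edges_append p q ▸ h.2
  exact ⟨h.1.of_append_left, (List.isChain_append.mp hc).1⟩

theorem IsAltPath.takeUntil {a b w : V} {p : S.G.Walk a b} (hp : S.IsAltPath p)
    (hw : w ∈ p.support) : S.IsAltPath (p.takeUntil w hw) :=
  IsAltPath.of_append_left (q := p.dropUntil w hw) (by rwa [p.take_spec hw])

theorem rho_eq_decide_odd {u : V} {p : S.G.Walk S.f u} (hp : S.IsAltPath p)
    {l₁ l₂ : List (Sym2 V)} {e : Sym2 V} (h : p.edges = l₁ ++ e :: l₂) :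
    S.rho e = decide (Odd l₁.length) := by
  have hhead : ∀ x ∈ p.edges.head?, x ∉ S.M := by
    intro x hx hxM
    apply S.f_free x hxM
    cases p with
    | nil => simp at hx
    | cons =>
      simp only [Walk.edges_cons, List.head?_cons, Option.mem_def, Option.some.injEq] at hx
      simp [← hx]
  exact rho_eq_decide_iff.mpr (List.prop_iff_odd_of_isChain (h ▸ hp.2) (h ▸ hhead))

theorem rho_eq_decide_even_of_getLast? {u : V} {p : S.G.Walk S.f u} (hp : S.IsAltPath p)
    {e : Sym2 V} (he : p.edges.getLast? = some e) :
    S.rho e = decide (Even p.length) := by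
  have hpos : p.length ≠ 0 := by
    rw [← Walk.length_edges]
    rintro h
    simp [List.length_eq_zero_iff.mp h] at he
  rw [rho_eq_decide_odd hp (List.dropLast_append_getLast? e he).symm, List.length_dropLast,
    Walk.length_edges]
  obtain ⟨n, hn⟩ := Nat.exists_eq_succ_of_ne_zero hpos
  simp [hn, Nat.even_add_one]

theorem IsAltPath.concat {u w : V} {p : S.G.Walk S.f u} (hp : S.IsAltPath p)
    (h : S.G.Adj u w) (hw : w ∉ p.support) (hρ : S.rho s(u, w) = decide (Odd p.length)) :
    S.IsAltPath (p.concat h) := by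
  refine ⟨hp.1.concat hw h, ?_⟩
  rw [Walk.edges_concat, List.concat_eq_append]
  refine List.isChain_append.mpr ⟨hp.2, List.isChain_singleton _, ?_⟩
  rintro x hx _ ⟨⟩
  apply mem_M_iff_not_mem_M_of_rho_ne
  rw [rho_eq_decide_even_of_getLast? hp hx, hρ]
  simp [← Nat.not_odd_iff_even]

/-- The junction alternates because the two paths to `u` have opposite parities. -/
theorem IsAltPath.append_reverse {u z : V} {p : S.G.Walk S.f u} {q : S.G.Walk S.f z}
    {r : S.G.Walk z u} (hp : S.IsAltPath p) (hqr : S.IsAltPath (q.append r))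
    (hpar : Odd p.length ↔ ¬ Odd (q.append r).length)
    (hdisj : ∀ v ∈ p.support, v ∈ r.support → v = u) :
    S.IsAltPath (p.append r.reverse) := by
  have hr : r.reverse.support.Nodup :=
    (Walk.isPath_def _).mp (hqr.1.of_append_right.reverse)
  rw [← Walk.cons_tail_support r.reverse, List.nodup_cons] at hr
  have hc : (q.edges ++ r.edges).IsChain _ := Walk.edges_append q r ▸ hqr.2
  refine ⟨?_, ?_⟩
  · rw [Walk.isPath_def, Walk.support_append, List.nodup_append']
    refine ⟨(Walk.isPath_def _).mp hp.1, hr.2, fun v hv hvr => ?_⟩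
    have hvr' : v ∈ r.support := by
      simpa [Walk.support_reverse] using List.mem_of_mem_tail hvr
    exact hr.1 (hdisj v hv hvr' ▸ hvr)
  · rw [Walk.edges_append, Walk.edges_reverse]
    refine List.isChain_append.mpr ⟨hp.2, ?_, ?_⟩
    · exact List.isChain_reverse.mpr ((List.isChain_append.mp hc).2.1.imp fun _ _ h => by tauto)
    · intro x hx y hy
      rw [List.head?_reverse] at hy
      have hy' : (q.append r).edges.getLast? = some y := by
        rw [Walk.edges_append, List.getLast?_append, hy]
        rfl
      apply mem_M_iff_not_mem_M_of_rho_ne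
      rw [rho_eq_decide_even_of_getLast? hp hx, rho_eq_decide_even_of_getLast? hqr hy']
      simp only [ne_eq, decide_eq_decide, ← Nat.not_odd_iff_even]
      tauto

theorem adist_le_length {u : V} {p : S.G.Walk S.f u} (hp : S.IsAltPath p) :
    S.adist (decide (Odd p.length)) u ≤ p.length :=
  sInf_le ⟨p, hp, rfl, decide_eq_true_iff.symm⟩

theorem exists_isAltPath_length_eq_adist {θ : Bool} {u : V} (h : S.adist θ u ≠ ⊤) :
    ∃ p : S.G.Walk S.f u, S.IsAltPath p ∧ (p.length : ℕ∞) = S.adist θ u ∧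
      decide (Odd p.length) = θ := by
  have hne : {n : ℕ∞ | ∃ p : S.G.Walk S.f u,
      S.IsAltPath p ∧ (p.length : ℕ∞) = n ∧ (Odd p.length ↔ θ = true)}.Nonempty := by
    by_contra hempty
    exact h (by rw [adist, Set.not_nonempty_iff_eq_empty.mp hempty, sInf_empty])
  obtain ⟨p, hp, hlen, hpar⟩ := csInf_mem hne
  exact ⟨p, hp, hlen, by cases θ <;> simpa using hpar⟩

theorem eq_decide_odd_of_adist_eq {θ : Bool} {u : V} {n : ℕ} (h : S.adist θ u = n) :
    θ = decide (Odd n) := by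
  obtain ⟨p, -, hlen, hpar⟩ := exists_isAltPath_length_eq_adist (h ▸ ENat.natCast_ne_top n)
  rw [h, Nat.cast_inj] at hlen
  rw [← hpar, hlen]

theorem distOrth_le_adist_s7 (θ : Bool) (u : V) : S.distOrth u ≤ S.adist θ u := by
  unfold distOrth op
  split_ifs with h <;> cases θ
  exacts [h.le, le_rfl, le_rfl, not_lt.mp h]

theorem distOrth_le_length {u : V} {p : S.G.Walk S.f u} (hp : S.IsAltPath p) :
    S.distOrth u ≤ p.length :=
  (distOrth_le_adist_s7 _ u).trans (adist_le_length hp)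

theorem distUnorth_f : S.distUnorth S.f = ⊤ := by
  have hodd : S.adist true S.f = ⊤ := by
    refine sInf_eq_top.mpr ?_
    rintro _ ⟨p, hp, -, hpar⟩
    simp [Walk.length_eq_zero_iff.mpr (Walk.isPath_iff_nil.mp hp.1)] at hpar
  have heven : S.adist false S.f = 0 :=
    nonpos_iff_eq_zero.mp (adist_le_length (p := Walk.nil) ⟨Walk.IsPath.nil, List.isChain_nil⟩)
  simp [distUnorth, op, hodd, heven]

theorem distOrth_le_adist_rho_add_one {u w : V} (h : S.G.Adj w u) :
    S.distOrth u ≤ S.adist (S.rho s(w, u)) w + 1 := by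
  by_cases htop : S.adist (S.rho s(w, u)) w = ⊤
  · simp [htop]
  obtain ⟨p, hp, hlen, hpar⟩ := exists_isAltPath_length_eq_adist htop
  rw [← hlen]
  by_cases hu : u ∈ p.support
  · calc S.distOrth u ≤ (p.takeUntil u hu).length := distOrth_le_length (hp.takeUntil hu)
      _ ≤ p.length + 1 := by
        exact_mod_cast (p.length_takeUntil_le_length hu).trans (Nat.le_succ _)
  · calc S.distOrth u ≤ (p.concat h).length := distOrth_le_length (hp.concat h hu hpar.symm)
      _ = p.length + 1 := by simp

theorem exists_prefix_of_mem_EP {u : V} {e : Sym2 V} (he : e ∈ S.EP u) :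
    ∃ (w : V) (p : S.G.Walk S.f w), S.G.Adj w u ∧ e = s(w, u) ∧ S.IsAltPath p ∧
      (p.length : ℕ∞) + 1 = S.distOrth u ∧ S.rho e = decide (Odd p.length) := by
  obtain ⟨p, hp, hlen, hlast⟩ := he
  have hnil : ¬ p.Nil := fun hn => by simp [Walk.edges_eq_nil.mpr hn] at hlast
  obtain ⟨w, h, p', rfl⟩ :
      ∃ (w : V) (h : S.G.Adj w u) (p' : S.G.Walk S.f w), p = p'.concat h :=
    ⟨_, p.adj_penultimate hnil, p.dropLast, (Walk.concat_dropLast _).symm⟩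
  have hedges : (p'.concat h).edges = p'.edges ++ [s(w, u)] := by simp [Walk.edges_concat]
  obtain rfl : s(w, u) = e := by simpa [hedges] using hlast
  have hp' : S.IsAltPath p' := IsAltPath.of_append_left (p'.concat_eq_append h ▸ hp)
  refine ⟨w, p', h, rfl, hp', by simpa using hlen, ?_⟩
  rw [rho_eq_decide_odd hp hedges, Walk.length_edges]

theorem distOrth_add_one_le_of_mem_EP {u w : V} (h : s(w, u) ∈ S.EP u) :
    S.distOrth w + 1 ≤ S.distOrth u := by
  obtain ⟨w', p, hadj, heq, hp, hlen, -⟩ := exists_prefix_of_mem_EP h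
  obtain rfl : w = w' := by
    rcases Sym2.eq_iff.mp heq with ⟨h, -⟩ | ⟨-, h⟩
    exacts [h, absurd h.symm hadj.ne]
  rw [← hlen]
  gcongr
  exact distOrth_le_length hp

theorem rho_eq_not_op_of_mem_EP {u : V} {e : Sym2 V} (he : e ∈ S.EP u) :
    S.rho e = !S.op u := by
  obtain ⟨w, p, -, -, -, hlen, hρ⟩ := exists_prefix_of_mem_EP he
  have hop : S.op u = decide (Odd (p.length + 1)) :=
    eq_decide_odd_of_adist_eq (θ := S.op u) (by rw [← distOrth, ← hlen]; push_cast; rfl)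
  simp only [hρ, hop, Nat.odd_add_one, decide_not, Bool.not_not]

theorem level_mk (y z : V) : S.level s(y, z) =
    ((Fintype.card V + 1 : ℕ) : ℕ∞) *
        (S.adist (S.rho s(y, z)) y + S.adist (S.rho s(y, z)) z + 1) +
      max (S.adist (S.rho s(y, z)) y) (S.adist (S.rho s(y, z)) z) :=
  rfl

theorem level_ge_of_mem_EP {t : V} {e : Sym2 V} (he : e ∈ S.EP t) :
    ((Fintype.card V + 1 : ℕ) : ℕ∞) * (S.distOrth t + S.distUnorth t) + S.distUnorth t ≤
      S.level e := by
  obtain ⟨w, -, hadj, rfl, -⟩ := exists_prefix_of_mem_EP he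
  have hw := distOrth_le_adist_rho_add_one hadj
  rw [rho_eq_not_op_of_mem_EP he] at hw
  rw [level_mk, rho_eq_not_op_of_mem_EP he, distUnorth]
  refine add_le_add (mul_le_mul_right ?_ _) (le_max_right _ _)
  calc S.distOrth t + S.adist (!S.op t) t ≤ S.adist (!S.op t) w + 1 + S.adist (!S.op t) t := by
        gcongr
    _ = _ := add_right_comm _ _ _

end Sys

namespace ABT

variable {S : Sys V} (T : ABT S)

theorem inSub_refl (t : V) : T.inSub t t := ⟨0, rfl⟩

theorem inSub_of_inSub_par {t y : V} (h : T.inSub t (T.par y)) : T.inSub t y :=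
  let ⟨n, hn⟩ := h
  ⟨n + 1, hn⟩

theorem inSub_par {t z : V} (hz : T.inSub t z) (hzt : z ≠ t) : T.inSub t (T.par z) := by
  obtain ⟨_ | n, hn⟩ := hz
  · exact absurd hn hzt
  · exact ⟨n, hn⟩

theorem not_inSub_f {t : V} (htf : t ≠ S.f) : ¬ T.inSub t S.f :=
  fun ⟨n, hn⟩ => htf (hn ▸ Function.iterate_fixed T.par_f n)

theorem distOrth_add_le_of_iterate_par_eq {t : V} (htf : t ≠ S.f) :
    ∀ (n : ℕ) (v : V), T.par^[n] v = t → S.distOrth t + n ≤ S.distOrth v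
  | 0, _, rfl => by simp
  | n + 1, v, hv => by
    have hvf : v ≠ S.f := by
      rintro rfl
      exact T.not_inSub_f htf ⟨n + 1, hv⟩
    calc S.distOrth t + (n + 1 : ℕ) = S.distOrth t + n + 1 := by push_cast; ring
      _ ≤ S.distOrth (T.par v) + 1 := by
        gcongr
        exact distOrth_add_le_of_iterate_par_eq htf n _ hv
      _ ≤ S.distOrth v := Sys.distOrth_add_one_le_of_mem_EP (T.par_mem v hvf)

theorem distOrth_le_of_inSub {t v : V} (htf : t ≠ S.f) (hv : T.inSub t v) :
    S.distOrth t ≤ S.distOrth v :=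
  let ⟨n, hn⟩ := hv
  le_self_add.trans (T.distOrth_add_le_of_iterate_par_eq htf n v hn)

theorem distOrth_add_one_le_of_inSub {t v : V} (htf : t ≠ S.f) (hv : T.inSub t v)
    (hvt : v ≠ t) : S.distOrth t + 1 ≤ S.distOrth v := by
  obtain ⟨_ | n, hn⟩ := hv
  · exact absurd hn hvt
  · exact le_trans (by gcongr; exact_mod_cast Nat.le_add_left 1 n)
      (T.distOrth_add_le_of_iterate_par_eq htf (n + 1) v hn)

theorem eq_of_mem_support_of_inSub {t v : V} (htf : t ≠ S.f) {p : S.G.Walk S.f t}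
    (hp : S.IsAltPath p) (hlen : (p.length : ℕ∞) = S.distOrth t) (hv : v ∈ p.support)
    (hvt : T.inSub t v) : v = t := by
  by_contra hne
  have := calc (p.length : ℕ∞) + 1 = S.distOrth t + 1 := by rw [hlen]
    _ ≤ S.distOrth v := T.distOrth_add_one_le_of_inSub htf hvt hne
    _ ≤ (p.takeUntil v hv).length := Sys.distOrth_le_length (hp.takeUntil hv)
    _ ≤ p.length := by exact_mod_cast p.length_takeUntil_le_length hv
  norm_cast at this
  omega

theorem incoming_mk_of_not_mem_EP {t y z : V} (hyz : S.G.Adj y z) (hz : T.inSub t z) (hy : ¬ T.inSub t y)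
    (hEP : s(y, z) ∉ S.EP t) : T.Incoming t s(y, z) := by
  refine ⟨hyz, ?_, y, z, rfl, hz, hy⟩
  rintro ⟨u, hu, huv⟩
  rcases Sym2.eq_iff.mp huv with ⟨rfl, rfl⟩ | ⟨rfl, rfl⟩
  · exact hy (T.inSub_of_inSub_par hz)
  · by_cases hzt : z = t
    · subst hzt
      exact hEP (T.par_mem z hu)
    · exact hy (T.inSub_par hz hzt)

theorem not_mem_EP_and_adist_le_of_crossing {t y z : V} (htf : t ≠ S.f) {P : S.G.Walk S.f t}
    (hP : S.IsAltPath P) (hPlen : (P.length : ℕ∞) = S.distOrth t)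
    (hPop : decide (Odd P.length) = S.op t) {q : S.G.Walk S.f y} (hyz : S.G.Adj y z)
    {r : S.G.Walk z t} (hQ : S.IsAltPath (q.append (Walk.cons hyz r)))
    (hpar : Odd P.length ↔ ¬ Odd (q.append (Walk.cons hyz r)).length)
    (hy : ¬ T.inSub t y) (hr : ∀ v ∈ r.support, T.inSub t v) :
    s(y, z) ∉ S.EP t ∧ S.adist (S.rho s(y, z)) y ≤ q.length ∧
      S.adist (S.rho s(y, z)) z ≤ (P.length + r.length : ℕ) := by
  have hQ' : S.IsAltPath ((q.concat hyz).append r) := by rwa [Walk.concat_append]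
  have hρ : S.rho s(y, z) = decide (Odd q.length) := by
    rw [Sys.rho_eq_decide_odd hQ (l₁ := q.edges) (l₂ := r.edges) (by simp [Walk.edges_append]),
      Walk.length_edges]
  have hρW : S.rho s(y, z) = decide (Odd (P.length + r.length)) := by
    simp only [Walk.length_append, Walk.length_cons] at hpar
    rw [hρ, decide_eq_decide]
    simp only [Nat.odd_iff] at hpar ⊢
    omega
  have hW : S.IsAltPath (P.append r.reverse) :=
    hP.append_reverse hQ' (by rwa [Walk.concat_append])
      fun v hv hvr => T.eq_of_mem_support_of_inSub htf hP hPlen hv (hr v hvr)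
  refine ⟨fun he => ?_, hρ ▸ Sys.adist_le_length hQ.of_append_left, ?_⟩
  · obtain ⟨w, -, -, heq, -⟩ := Sys.exists_prefix_of_mem_EP he
    obtain rfl : z = t := by
      rcases Sym2.eq_iff.mp heq with ⟨-, h⟩ | ⟨rfl, -⟩
      exacts [h, absurd (T.inSub_refl y) hy]
    have hr0 : r.length = 0 :=
      Walk.length_eq_zero_iff.mpr (Walk.isPath_iff_nil.mp hQ'.1.of_append_right)
    have hρEP := Sys.rho_eq_not_op_of_mem_EP he
    rw [hρW, hr0, add_zero, hPop] at hρEP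
    simp at hρEP
  · have hz := Sys.adist_le_length hW
    rw [Walk.length_append, Walk.length_reverse, ← hρW] at hz
    exact_mod_cast hz

theorem exists_incoming_not_mem_EP_level_le {t : V} (ht : S.distUnorth t < ⊤) :
    ∃ e, T.Incoming t e ∧ e ∉ S.EP t ∧
      S.level e ≤ ((Fintype.card V + 1 : ℕ) : ℕ∞) * (S.distOrth t + S.distUnorth t) +
        S.distUnorth t := by
  have htf : t ≠ S.f := by
    rintro rfl
    simp [Sys.distUnorth_f] at ht
  obtain ⟨Q, hQ, hQlen, hQpar⟩ :=
    Sys.exists_isAltPath_length_eq_adist (θ := !S.op t) (u := t) ht.ne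
  obtain ⟨P, hP, hPlen, hPpar⟩ := Sys.exists_isAltPath_length_eq_adist (θ := S.op t) (u := t)
    ((Sys.distOrth_le_adist_s7 _ t).trans_lt ht).ne
  have hpar : Odd P.length ↔ ¬ Odd Q.length := by
    rw [← decide_eq_decide, decide_not, hPpar, hQpar, Bool.not_not]
  obtain ⟨y, z, q, hyz, r, rfl, hy, hr⟩ := Q.exists_eq_append_cons_of_end_mem (T.inSub t)
    (T.inSub_refl t) ⟨S.f, Q.start_mem_support, T.not_inSub_f htf⟩
  have hz : T.inSub t z := hr z r.start_mem_support
  obtain ⟨hEP, hy_le, hz_le⟩ :=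
    T.not_mem_EP_and_adist_le_of_crossing htf hP hPlen hPpar hyz hQ hpar hy hr
  refine ⟨s(y, z), T.incoming_mk_of_not_mem_EP hyz hz hy hEP, hEP, ?_⟩
  have hPq : (P.length : ℕ∞) ≤ q.length + 1 :=
    calc (P.length : ℕ∞) = S.distOrth t := hPlen
      _ ≤ S.distOrth z := T.distOrth_le_of_inSub htf hz
      _ ≤ S.adist (S.rho s(y, z)) y + 1 := Sys.distOrth_le_adist_rho_add_one hyz
      _ ≤ q.length + 1 := by gcongr
  norm_cast at hPq
  have hQl : (q.append (Walk.cons hyz r)).length = q.length + 1 + r.length := by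
    simp only [Walk.length_append, Walk.length_cons]; ring
  rw [← show (P.length : ℕ∞) = S.distOrth t from hPlen,
    ← show ((q.append (Walk.cons hyz r)).length : ℕ∞) = S.distUnorth t from hQlen,
    Sys.level_mk]
  refine add_le_add (mul_le_mul_right ?_ _) (max_le ?_ ?_)
  · calc S.adist (S.rho s(y, z)) y + S.adist (S.rho s(y, z)) z + 1
        ≤ q.length + (P.length + r.length : ℕ) + 1 := by gcongr
      _ = P.length + (q.append (Walk.cons hyz r)).length := by rw [hQl]; push_cast; ring
  · exact hy_le.trans (by exact_mod_cast (by omega))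
  · exact hz_le.trans (by exact_mod_cast (by omega))

theorem exists_isMIE_not_mem_EP {t : V} {e₀ : Sym2 V} (hinc : T.Incoming t e₀)
    (hEP : e₀ ∉ S.EP t) (hle : ∀ e ∈ S.EP t, S.level e₀ ≤ S.level e) :
    ∃ e, T.IsMIE t e ∧ e ∉ S.EP t := by
  obtain ⟨e, he, hmin⟩ :=
    Set.exists_min_image {e | T.Incoming t e} S.level (Set.toFinite _) ⟨e₀, hinc⟩
  by_cases heEP : e ∈ S.EP t
  · exact ⟨e₀, ⟨hinc, fun e' he' => (hle e heEP).trans (hmin e' he')⟩, hEP⟩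
  · exact ⟨e, ⟨he, hmin⟩, heEP⟩

end ABT

/-- For a vertex `t` of an alternating base tree `T` with `dist^β(t) < ∞`,
there exists a minimum-level incoming edge `e*` of `T(t)` with `e* ∉ EP(t)`. -/
theorem stmt7 (S : Sys V) (T : ABT S) (t : V) (ht : S.distUnorth t < ⊤) :
    ∃ estar : Sym2 V, T.IsMIE t estar ∧ estar ∉ S.EP t := by
  obtain ⟨e₀, hinc, hEP, hle⟩ := T.exists_incoming_not_mem_EP_level_le ht
  exact T.exists_isMIE_not_mem_EP hinc hEP fun e he => hle.trans (Sys.level_ge_of_mem_EP he)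
end
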